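/- arXiv:1505.00036 — 7 statements merged into one kernel-verified Lean document; each statement's English description precedes it below -/
import Mathlib

section
/- Let φ be an influence measure on full-domain rational-valued datasets that satisfies the symmetry axiom (Sym), the dummy axiom (D), and the additivity axiom (AD). Then φ is identically zero: for every dataset G = ⟨N, A, v⟩ and every feature i ∈ N, φ_i(G) = 0. -/
/-!
Summing a dataset `v` over all relabelings of the states of feature `i` produces a dataset
in which `i` is a dummy, so its influence vanishes by (D). By (AD) and state symmetry that
influence is also `|Sym(A i)|` times the influence of `i` in `v`, hence the latter is zero.
-/

open Equiv

theorem Equiv.Perm.sum_comp_apply_eq {α M : Type*} [Fintype α] [DecidableEq α]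
    [AddCommMonoid M] (f : α → M) (b c : α) :
    ∑ τ : Perm α, f (τ b) = ∑ τ : Perm α, f (τ c) :=
  Fintype.sum_equiv (Equiv.mulRight (swap b c)) _ _ fun τ => by simp [Perm.mul_apply]

section Symmetrize

variable {ι : Type*} [DecidableEq ι] {A : ι → Type*} {M : Type*} [AddCommMonoid M]

def symmetrizeAt (i : ι) [Fintype (A i)] [DecidableEq (A i)] (v : (∀ j, A j) → M) :
    (∀ j, A j) → M :=
  ∑ τ : Perm (A i), fun a => v (Function.update a i (τ (a i)))

theorem symmetrizeAt_apply (i : ι) [Fintype (A i)] [DecidableEq (A i)]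
    (v : (∀ j, A j) → M) (a : ∀ j, A j) :
    symmetrizeAt i v a = ∑ τ : Perm (A i), v (Function.update a i (τ (a i))) :=
  Finset.sum_apply a _ _

theorem symmetrizeAt_update (i : ι) [Fintype (A i)] [DecidableEq (A i)]
    (v : (∀ j, A j) → M) (a : ∀ j, A j) (b : A i) :
    symmetrizeAt i v (Function.update a i b) = symmetrizeAt i v a := by
  simp only [symmetrizeAt_apply, Function.update_self, Function.update_idem]
  exact Perm.sum_comp_apply_eq (fun c => v (Function.update a i c)) b (a i)

end Symmetrize

theorem influence_sym_dummy_additive_is_zero_general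
    {ι : Type*} [DecidableEq ι]
    {A : ι → Type*} [∀ i, Fintype (A i)]
    (φ : ((∀ i, A i) → ℚ) → ι → ℝ)
    -- Dummy axiom (D)
    (hD : ∀ (v : (∀ i, A i) → ℚ) (i : ι),
      (∀ (a : ∀ i, A i) (b : A i), v (Function.update a i b) = v a) → φ v i = 0)
    -- State symmetry (part of Sym)
    (hSymState : ∀ (v : (∀ i, A i) → ℚ) (i : ι) (τ : A i ≃ A i) (j : ι),
      φ (fun a => v (Function.update a i (τ (a i)))) j = φ v j)
    -- Additivity (AD)
    (hAdd : ∀ (v₁ v₂ : (∀ i, A i) → ℚ) (i : ι),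
      φ (fun a => v₁ a + v₂ a) i = φ v₁ i + φ v₂ i) :
    ∀ (v : (∀ i, A i) → ℚ) (i : ι), φ v i = 0 := by
  classical
  intro v i
  let φi : ((∀ i, A i) → ℚ) →+ ℝ := AddMonoidHom.mk' (φ · i) (hAdd · · i)
  have h_dummy : φ (symmetrizeAt i v) i = 0 := hD _ i (symmetrizeAt_update i v)
  have h_card : φ (symmetrizeAt i v) i = Fintype.card (Perm (A i)) • φ v i := by
    change φi (symmetrizeAt i v) = _
    simp only [symmetrizeAt, map_sum, φi, AddMonoidHom.mk'_apply, hSymState,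
      Finset.sum_const, Finset.card_univ]
  rw [h_card, smul_eq_zero] at h_dummy
  exact h_dummy.resolve_left Fintype.card_ne_zero

/-- Any influence measure on full-domain rational-valued datasets
satisfying symmetry (state symmetry and feature symmetry), the dummy axiom and
additivity is identically zero. -/
theorem influence_sym_dummy_additive_is_zero
    {ι : Type*} [Fintype ι] [DecidableEq ι]
    {A : ι → Type*} [∀ i, Fintype (A i)] [∀ i, Nonempty (A i)]
    (φ : ((∀ i, A i) → ℚ) → ι → ℝ)
    -- Dummy axiom (D)
    (hD : ∀ (v : (∀ i, A i) → ℚ) (i : ι),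
      (∀ (a : ∀ i, A i) (b : A i), v (Function.update a i b) = v a) → φ v i = 0)
    -- State symmetry (part of Sym)
    (hSymState : ∀ (v : (∀ i, A i) → ℚ) (i : ι) (τ : A i ≃ A i) (j : ι),
      φ (fun a => v (Function.update a i (τ (a i)))) j = φ v j)
    -- Feature symmetry (part of Sym)
    (hSymFeat : ∀ (v : (∀ i, A i) → ℚ) (σ : ι ≃ ι) (h : ∀ i, A (σ i) = A i) (i : ι),
      φ (fun a => v (fun i => cast (h i) (a (σ i)))) (σ i) = φ v i)
    -- Additivity (AD)
    (hAdd : ∀ (v₁ v₂ : (∀ i, A i) → ℚ) (i : ι),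
      φ (fun a => v₁ a + v₂ a) i = φ v₁ i + φ v₂ i) :
    ∀ (v : (∀ i, A i) → ℚ) (i : ι), φ v i = 0 :=
  influence_sym_dummy_additive_is_zero_general φ hD hSymState hAdd
end

section
/- The influence measure χ satisfies the dummy axiom (D), the symmetry axiom (Sym), and the disjoint union axiom (DU). -/
/-- The influence measure χ: the number of pairs (a, b) with a winning and the
i-modified profile losing, plus the number of pairs with a losing and the
i-modified profile winning. -/
def chiMeasure {ι : Type*} [Fintype ι] [DecidableEq ι]
    {A : ι → Type*} [∀ i, Fintype (A i)] [∀ i, DecidableEq (A i)]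
    (i : ι) (W L : Finset (∀ j, A j)) : ℕ :=
  ((W ×ˢ (Finset.univ : Finset (A i))).filter
      fun p => Function.update p.1 i p.2 ∈ L).card
  + ((L ×ˢ (Finset.univ : Finset (A i))).filter
      fun p => Function.update p.1 i p.2 ∈ W).card

/-- Relabeling of a profile by a feature permutation σ with `A (σ i) = A i`. -/
def relabelProfile {ι : Type*} {A : ι → Type*}
    (σ : ι ≃ ι) (h : ∀ i, A (σ i) = A i) (a : ∀ j, A j) : ∀ k, A k :=
  fun k =>
    cast ((h (σ.symm k)).symm.trans (congrArg A (σ.apply_symm_apply k)))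
      (a (σ.symm k))

/-!
Write `swings i W L` for the pairs `(a, b)` with `a ∈ W` and `(a_{-i}, b) ∈ L`, so that
`χ_i(W, L) = #swings i W L + #swings i L W`. (D) says both sets are empty, and (DU) holds because
`swings` turns a disjoint union in either argument into a disjoint union. Both symmetries are
instances of one invariance: if an injective map `e` of profiles satisfies
`e (a_{-i}, b) = ((e a)_{-i'}, f b)` for a bijection `f`, then `Prod.map e f` maps the swings of
`(W, L)` for `i` bijectively onto the swings of `(e W, e L)` for `i'`.
-/

open Finset Function

section Swings

variable {ι : Type*} [Fintype ι] [DecidableEq ι]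
  {A : ι → Type*} [∀ i, Fintype (A i)] [∀ i, DecidableEq (A i)]

def swings (i : ι) (W L : Finset (∀ j, A j)) : Finset ((∀ j, A j) × A i) :=
  (W ×ˢ univ).filter fun p => update p.1 i p.2 ∈ L

theorem chiMeasure_eq_card_swings (i : ι) (W L : Finset (∀ j, A j)) :
    chiMeasure i W L = #(swings i W L) + #(swings i L W) :=
  rfl

theorem chiMeasure_comm (i : ι) (W L : Finset (∀ j, A j)) :
    chiMeasure i W L = chiMeasure i L W := by
  simp only [chiMeasure_eq_card_swings, add_comm]

theorem swings_eq_empty {i : ι} {W L : Finset (∀ j, A j)}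
    (h : ∀ a ∈ W, ∀ b : A i, update a i b ∉ L) : swings i W L = ∅ :=
  filter_eq_empty_iff.mpr fun p hp => h p.1 (mem_product.mp hp).1 p.2

theorem swings_union_left (i : ι) (R R' Q : Finset (∀ j, A j)) :
    swings i (R ∪ R') Q = swings i R Q ∪ swings i R' Q := by
  rw [swings, union_product, filter_union]; rfl

theorem swings_union_right (i : ι) (Q R R' : Finset (∀ j, A j)) :
    swings i Q (R ∪ R') = swings i Q R ∪ swings i Q R' := by
  simp only [swings, mem_union, filter_or]

theorem disjoint_swings_left {i : ι} {R R' : Finset (∀ j, A j)} (h : Disjoint R R')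
    (Q : Finset (∀ j, A j)) : Disjoint (swings i R Q) (swings i R' Q) :=
  disjoint_filter_filter (disjoint_product.mpr (Or.inl h))

theorem disjoint_swings_right {i : ι} {R R' : Finset (∀ j, A j)} (h : Disjoint R R')
    (Q : Finset (∀ j, A j)) : Disjoint (swings i Q R) (swings i Q R') :=
  disjoint_filter.mpr fun _ _ hR hR' => disjoint_left.mp h hR hR'

theorem chiMeasure_union_right (i : ι) (Q : Finset (∀ j, A j)) {R R' : Finset (∀ j, A j)}
    (h : Disjoint R R') : chiMeasure i Q (R ∪ R') = chiMeasure i Q R + chiMeasure i Q R' := by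
  simp only [chiMeasure_eq_card_swings, swings_union_left, swings_union_right,
    card_union_of_disjoint (disjoint_swings_left h Q),
    card_union_of_disjoint (disjoint_swings_right h Q)]
  ring

theorem chiMeasure_union_left (i : ι) (Q : Finset (∀ j, A j)) {R R' : Finset (∀ j, A j)}
    (h : Disjoint R R') : chiMeasure i (R ∪ R') Q = chiMeasure i R Q + chiMeasure i R' Q := by
  simp only [chiMeasure_comm i _ Q, chiMeasure_union_right i Q h]

theorem swings_image {κ : Type*} [Fintype κ] [DecidableEq κ] {B : κ → Type*}
    [∀ k, Fintype (B k)] [∀ k, DecidableEq (B k)]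
    {e : (∀ j, A j) → ∀ k, B k} (he : Injective e) {i : ι} {i' : κ} (f : A i ≃ B i')
    (hf : ∀ a b, e (update a i b) = update (e a) i' (f b)) (W L : Finset (∀ j, A j)) :
    swings i' (W.image e) (L.image e) = (swings i W L).image (Prod.map e f) := by
  ext ⟨a', b'⟩
  simp only [swings, mem_filter, mem_product, mem_univ, and_true, mem_image, Prod.exists,
    Prod.map, Prod.mk.injEq]
  constructor
  · rintro ⟨⟨a, ha, rfl⟩, c, hc, hupd⟩
    refine ⟨a, f.symm b', ⟨ha, ?_⟩, rfl, f.apply_symm_apply b'⟩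
    rwa [he (by rw [hf, f.apply_symm_apply, hupd] : e (update a i (f.symm b')) = e c)]
  · rintro ⟨a, b, ⟨ha, hab⟩, rfl, rfl⟩
    exact ⟨⟨a, ha, rfl⟩, _, hab, hf a b⟩

theorem chiMeasure_image {κ : Type*} [Fintype κ] [DecidableEq κ] {B : κ → Type*}
    [∀ k, Fintype (B k)] [∀ k, DecidableEq (B k)]
    {e : (∀ j, A j) → ∀ k, B k} (he : Injective e) {i : ι} {i' : κ} (f : A i ≃ B i')
    (hf : ∀ a b, e (update a i b) = update (e a) i' (f b)) (W L : Finset (∀ j, A j)) :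
    chiMeasure i' (W.image e) (L.image e) = chiMeasure i W L := by
  simp only [chiMeasure_eq_card_swings, swings_image he f hf,
    card_image_of_injective _ (he.prodMap f.injective)]

end Swings

section StateSymmetry

variable {ι : Type*} [DecidableEq ι] {A : ι → Type*}

def updateState (i : ι) (τ : A i ≃ A i) (a : ∀ j, A j) : ∀ j, A j :=
  update a i (τ (a i))

theorem updateState_injective (i : ι) (τ : A i ≃ A i) : Injective (updateState i τ) :=
  LeftInverse.injective (g := updateState i τ.symm) fun a => by simp [updateState]

theorem updateState_update_self (i : ι) (τ : A i ≃ A i) (a : ∀ j, A j) (b : A i) :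
    updateState i τ (update a i b) = update (updateState i τ a) i (τ b) := by
  simp [updateState]

theorem updateState_update_of_ne {i j : ι} (τ : A i ≃ A i) (hji : j ≠ i) (a : ∀ j, A j)
    (b : A j) : updateState i τ (update a j b) = update (updateState i τ a) j b := by
  simp only [updateState, update_of_ne hji.symm, update_comm hji]

end StateSymmetry

section FeatureSymmetry

variable {ι : Type*} {A : ι → Type*} (σ : ι ≃ ι) (h : ∀ i, A (σ i) = A i)

theorem relabelProfile_apply (a : ∀ j, A j) (i : ι) :
    relabelProfile σ h a (σ i) = cast (h i).symm (a i) := by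
  rw [relabelProfile, cast_eq_iff_heq]
  exact (congr_arg_heq a (σ.symm_apply_apply i)).trans (cast_heq _ _).symm

theorem relabelProfile_injective : Injective (relabelProfile σ h) := fun a a' haa' =>
  funext fun i => (cast_inj _).mp <| by
    simpa only [relabelProfile_apply] using congr_fun haa' (σ i)

theorem relabelProfile_update [DecidableEq ι] (i : ι) (a : ∀ j, A j) (b : A i) :
    relabelProfile σ h (update a i b)
      = update (relabelProfile σ h a) (σ i) (cast (h i).symm b) := by
  funext k
  obtain ⟨j, rfl⟩ := σ.surjective k
  rcases eq_or_ne j i with rfl | hji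
  · rw [relabelProfile_apply, update_self, update_self]
  · rw [relabelProfile_apply, update_of_ne hji, update_of_ne (σ.injective.ne hji),
      relabelProfile_apply]

end FeatureSymmetry

theorem chi_satisfies_dummy_symmetry_disjoint_union_general
    {ι : Type*} [Fintype ι] [DecidableEq ι]
    {A : ι → Type*} [∀ i, Fintype (A i)] [∀ i, DecidableEq (A i)] :
    -- Dummy axiom (D)
    ((∀ (W L : Finset (∀ j, A j)), Disjoint W L → ∀ i : ι,
        (∀ a ∈ W, ∀ b : A i, Function.update a i b ∉ L) →
        (∀ a ∈ L, ∀ b : A i, Function.update a i b ∉ W) →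
        chiMeasure i W L = 0)
     ∧
     -- State symmetry (part of Sym)
     (∀ (W L : Finset (∀ j, A j)), Disjoint W L → ∀ (i : ι) (τ : A i ≃ A i) (j : ι),
        chiMeasure j (W.image fun a => Function.update a i (τ (a i)))
          (L.image fun a => Function.update a i (τ (a i))) = chiMeasure j W L)
     ∧
     -- Feature symmetry (part of Sym)
     (∀ (W L : Finset (∀ j, A j)), Disjoint W L →
        ∀ (σ : ι ≃ ι) (h : ∀ i, A (σ i) = A i) (i : ι),
        chiMeasure (σ i) (W.image (relabelProfile σ h)) (L.image (relabelProfile σ h))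
          = chiMeasure i W L)
     ∧
     -- Disjoint union (DU)
     (∀ (Q R R' : Finset (∀ j, A j)),
        Disjoint Q R → Disjoint Q R' → Disjoint R R' → ∀ i : ι,
        (chiMeasure i Q R + chiMeasure i Q R' = chiMeasure i Q (R ∪ R')) ∧
        (chiMeasure i R Q + chiMeasure i R' Q = chiMeasure i (R ∪ R') Q))) := by
  refine ⟨?_, ?_, ?_, ?_⟩
  · intro W L _ i hW hL
    rw [chiMeasure_eq_card_swings, swings_eq_empty hW, swings_eq_empty hL]
    rfl
  · intro W L _ i τ j
    rcases eq_or_ne j i with rfl | hji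
    · exact chiMeasure_image (updateState_injective j τ) τ (updateState_update_self j τ) W L
    · exact chiMeasure_image (updateState_injective i τ) (Equiv.refl _)
        (updateState_update_of_ne τ hji) W L
  · intro W L _ σ h i
    exact chiMeasure_image (relabelProfile_injective σ h) (Equiv.cast (h i).symm)
      (relabelProfile_update σ h i) W L
  · intro Q R R' _ _ hRR' i
    exact ⟨(chiMeasure_union_right i Q hRR').symm, (chiMeasure_union_left i Q hRR').symm⟩

/-- χ satisfies the dummy axiom (D), the symmetry axiom (Sym:
state symmetry and feature symmetry) and the disjoint union axiom (DU). -/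
theorem chi_satisfies_dummy_symmetry_disjoint_union
    {ι : Type*} [Fintype ι] [DecidableEq ι]
    {A : ι → Type*} [∀ i, Fintype (A i)] [∀ i, DecidableEq (A i)]
    [∀ i, Nonempty (A i)] :
    -- Dummy axiom (D)
    ((∀ (W L : Finset (∀ j, A j)), Disjoint W L → ∀ i : ι,
        (∀ a ∈ W, ∀ b : A i, Function.update a i b ∉ L) →
        (∀ a ∈ L, ∀ b : A i, Function.update a i b ∉ W) →
        chiMeasure i W L = 0)
     ∧
     -- State symmetry (part of Sym)
     (∀ (W L : Finset (∀ j, A j)), Disjoint W L → ∀ (i : ι) (τ : A i ≃ A i) (j : ι),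
        chiMeasure j (W.image fun a => Function.update a i (τ (a i)))
          (L.image fun a => Function.update a i (τ (a i))) = chiMeasure j W L)
     ∧
     -- Feature symmetry (part of Sym)
     (∀ (W L : Finset (∀ j, A j)), Disjoint W L →
        ∀ (σ : ι ≃ ι) (h : ∀ i, A (σ i) = A i) (i : ι),
        chiMeasure (σ i) (W.image (relabelProfile σ h)) (L.image (relabelProfile σ h))
          = chiMeasure i W L)
     ∧
     -- Disjoint union (DU)
     (∀ (Q R R' : Finset (∀ j, A j)),
        Disjoint Q R → Disjoint Q R' → Disjoint R R' → ∀ i : ι,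
        (chiMeasure i Q R + chiMeasure i Q R' = chiMeasure i Q (R ∪ R')) ∧
        (chiMeasure i R Q + chiMeasure i R' Q = chiMeasure i (R ∪ R') Q))) :=
  chi_satisfies_dummy_symmetry_disjoint_union_general
end

section
/- For every binary classifier v : A → {0,1} and every feature i ∈ N, the sum over partial profiles of the product of the number of winning and losing completions equals half the total influence count: ∑_{a_{-i} ∈ A_{-i}} |W_i(a_{-i})| · |L_i(a_{-i})| = (1/2) · ∑_{a ∈ A} ∑_{b ∈ A_i} |v(a_{-i}, b) − v(a)|. -/
/-!
Fix the partial profile `a_{-i}`. The completions `b, c ∈ A_i` contribute `|v(a_{-i}, b) - v(a_{-i}, c)| = 1`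
exactly when one of them wins and the other loses, so the ordered pairs counted are `W × L` and
`L × W`, i.e. `2 |W| |L|` of them. Splitting a full profile `a` as `(a_{-i}, c)` turns the influence
sum into the sum of these pair counts over all `a_{-i}`.
-/

open Finset

def combineProfile {ι : Type*} [DecidableEq ι] {A : ι → Type*}
    (i : ι) (f : ∀ j : {j : ι // j ≠ i}, A j.1) (b : A i) : ∀ k, A k :=
  fun k => if h : k = i then cast (congrArg A h).symm b else f ⟨k, h⟩

section Profiles

variable {ι : Type*} [DecidableEq ι] {A : ι → Type*}

theorem piSplitAt_symm_eq_combineProfile (i : ι) (f : ∀ j : {j : ι // j ≠ i}, A j.1) (b : A i) :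
    (Equiv.piSplitAt i A).symm (b, f) = combineProfile i f b := by
  funext k
  by_cases h : k = i
  · subst h; simp [combineProfile, Equiv.piSplitAt]
  · simp [combineProfile, Equiv.piSplitAt, h]

theorem update_combineProfile (i : ι) (f : ∀ j : {j : ι // j ≠ i}, A j.1) (b c : A i) :
    Function.update (combineProfile i f c) i b = combineProfile i f b := by
  funext k
  by_cases h : k = i
  · subst h; simp [combineProfile]
  · simp [combineProfile, h]

theorem sum_pi_eq_sum_sum_combineProfile [Fintype ι] [∀ i, Fintype (A i)]
    {M : Type*} [AddCommMonoid M] (i : ι) (F : (∀ j, A j) → M) :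
    ∑ a, F a = ∑ f : (∀ j : {j : ι // j ≠ i}, A j.1), ∑ c, F (combineProfile i f c) := by
  rw [← (Equiv.piSplitAt i A).symm.sum_comp, Fintype.sum_prod_type, Finset.sum_comm]
  simp only [piSplitAt_symm_eq_combineProfile]

end Profiles

theorem sum_sum_ite_iff_eq_two_mul_card {α : Type*} [Fintype α] (P : α → Prop) [DecidablePred P] :
    ∑ c, ∑ b, (if (P b ↔ P c) then (0 : ℝ) else 1)
      = 2 * ((#{b | P b} : ℝ) * (#{b | ¬ P b} : ℝ)) := by
  have split (b c : α) : (if (P b ↔ P c) then (0 : ℝ) else 1)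
      = (if P b then 1 else 0) * (if ¬ P c then 1 else 0)
        + (if P c then 1 else 0) * (if ¬ P b then 1 else 0) := by
    by_cases P b <;> by_cases P c <;> simp [*]
  simp only [split, sum_add_distrib, ← mul_sum, ← sum_mul, sum_boole]
  ring

theorem abs_sub_fin_two (x y : Fin 2) :
    |((x : ℕ) : ℝ) - ((y : ℕ) : ℝ)| = if (x = 1 ↔ y = 1) then 0 else 1 := by
  fin_cases x <;> fin_cases y <;> norm_num

theorem win_loss_product_eq_half_influence_general
    {ι : Type*} [Fintype ι] [DecidableEq ι]
    {A : ι → Type*} [∀ i, Fintype (A i)]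
    (v : (∀ j, A j) → Fin 2) (i : ι) :
    ∑ f : (∀ j : {j : ι // j ≠ i}, A j.1),
      (((Finset.univ.filter fun b : A i => v (combineProfile i f b) = 1).card : ℝ)
        * ((Finset.univ.filter fun b : A i => ¬ v (combineProfile i f b) = 1).card : ℝ))
      = (1 / 2) * ∑ a : ∀ j, A j, ∑ b : A i,
          |(((v (Function.update a i b) : ℕ)) : ℝ) - ((v a : ℕ) : ℝ)| := by
  rw [sum_pi_eq_sum_sum_combineProfile i, mul_sum]
  refine sum_congr rfl fun f _ => ?_
  simp only [update_combineProfile, abs_sub_fin_two, sum_sum_ite_iff_eq_two_mul_card]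
  ring

/-- For a binary classifier v and feature i, the sum over partial
profiles of the product of the number of winning and losing completions equals
half the total influence count. -/
theorem win_loss_product_eq_half_influence
    {ι : Type*} [Fintype ι] [DecidableEq ι]
    {A : ι → Type*} [∀ i, Fintype (A i)] [∀ i, DecidableEq (A i)]
    [∀ i, Nonempty (A i)]
    (v : (∀ j, A j) → Fin 2) (i : ι) :
    ∑ f : (∀ j : {j : ι // j ≠ i}, A j.1),
      (((Finset.univ.filter fun b : A i => v (combineProfile i f b) = 1).card : ℝ)
        * ((Finset.univ.filter fun b : A i => ¬ v (combineProfile i f b) = 1).card : ℝ))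
      = (1 / 2) * ∑ a : ∀ j, A j, ∑ b : A i,
          |(((v (Function.update a i b) : ℕ)) : ℝ) - ((v a : ℕ) : ℝ)| :=
  win_loss_product_eq_half_influence_general v i
end

section
/- Let v be the non-degenerate linear classifier on [0,1]^n defined by weights w and threshold q, where non-degeneracy means ∑_{k : w_k < 0} w_k < q < ∑_{k : w_k > 0} w_k (so that both classes have positive measure). Then for all features i, j: χ_i ≥ χ_j if and only if |w_i| ≥ |w_j|. -/
open MeasureTheory

/-- The linear classifier on ℝ^n with weights w and threshold q. -/
noncomputable def linClass {n : ℕ} (w : Fin n → ℝ) (q : ℝ) (x : Fin n → ℝ) : ℝ :=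
  if q ≤ ∑ k, w k * x k then 1 else 0

/-- The unit cube [0,1]^n. -/
def unitCube (n : ℕ) : Set (Fin n → ℝ) := Set.univ.pi fun _ => Set.Icc 0 1

/-- The influence χ_i = ∫_0^1 ∫_{[0,1]^n} |v(x_{-i}, b) − v(x)| dx db. -/
noncomputable def chiLin {n : ℕ} (w : Fin n → ℝ) (q : ℝ) (i : Fin n) : ℝ :=
  ∫ b in Set.Icc (0 : ℝ) 1,
    ∫ x in unitCube n, |linClass w q (Function.update x i b) - linClass w q x|

/-!
Freeze every coordinate of `x` except `x_i`. The classifier is then the indicator of a half-line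
`{s | r ≤ w_i s}`, and for an indicator of probability `p` the mean of `|v(b) - v(t)|` over
independent uniform `b, t` is `2 p (1 - p)`; this gives `χ_i` as the cube integral of
`2 bernoulliVar (r / w_i)`. Integrating out `x_j` as well, `χ_i - χ_j` becomes the cube integral of
`2 pairVarGap (w_i) (w_j) c`, where `c` is the threshold left for features `i` and `j` by the
others. The reflections `x_k ↦ 1 - x_k` reduce `pairVarGap` to positive weights, where it is an
explicit piecewise polynomial: it is nonnegative when `|w_j| ≤ |w_i|`, and positive when
`|w_j| < |w_i|` and `c` lies strictly between the least and the largest value `w_i x_i + w_j x_j`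
can take. Non-degeneracy of `(w, q)` puts `c` in that range at some point of the cube, and by
continuity the integral is then positive.
-/

open Set Function

section UpdateCoordinate

variable {ι α : Type*} [Fintype ι] [DecidableEq ι] [MeasurableSpace α]
  (ν : Measure α) [IsProbabilityMeasure ν]

theorem measurePreserving_update_pi (i : ι) :
    MeasurePreserving (fun p : (ι → α) × α => update p.1 i p.2)
      ((Measure.pi fun _ => ν).prod ν) (Measure.pi fun _ => ν) := by
  refine ⟨measurable_update', (Measure.pi_eq fun s hs => ?_).symm⟩
  have hpre : (fun p : (ι → α) × α => update p.1 i p.2) ⁻¹' univ.pi s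
      = univ.pi (update s i univ) ×ˢ s i := by
    ext ⟨x, t⟩
    simp only [mem_preimage, mem_univ_pi, mem_prod]
    refine ⟨fun h => ⟨fun k => ?_, by simpa using h i⟩, fun ⟨h, ht⟩ k => ?_⟩
    · rcases eq_or_ne k i with rfl | hk
      · simp
      · simpa [hk] using h k
    · rcases eq_or_ne k i with rfl | hk
      · simpa using ht
      · simpa [hk] using h k
  rw [Measure.map_apply measurable_update' (.univ_pi hs), hpre, Measure.prod_prod, Measure.pi_pi]
  simp_rw [apply_update (fun _ => ν), Finset.prod_update_of_mem (Finset.mem_univ i), measure_univ,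
    one_mul, Finset.sdiff_singleton_eq_erase, Finset.prod_erase_mul _ _ (Finset.mem_univ i)]

theorem integral_eq_integral_integral_update {E : Type*} [NormedAddCommGroup E] [NormedSpace ℝ E]
    {f : (ι → α) → E} (hf : Integrable f (Measure.pi fun _ => ν)) (i : ι) :
    ∫ x, f x ∂Measure.pi (fun _ => ν)
      = ∫ x, ∫ t, f (update x i t) ∂ν ∂Measure.pi (fun _ => ν) := by
  have h := measurePreserving_update_pi ν i
  have hf' : AEStronglyMeasurable f (Measure.map _ _) := h.map_eq ▸ hf.aestronglyMeasurable
  calc ∫ x, f x ∂Measure.pi (fun _ => ν)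
      = ∫ p, f (update p.1 i p.2) ∂(Measure.pi (fun _ => ν)).prod ν := by
        rw [← integral_map h.aemeasurable hf', h.map_eq]
    _ = _ := integral_prod _ (h.integrable_comp_of_integrable hf)

theorem integral_integral_abs_indicator_sub {A : Set α} (hA : MeasurableSet A) :
    ∫ t, ∫ b, |A.indicator 1 b - A.indicator (1 : α → ℝ) t| ∂ν ∂ν
      = 2 * (ν.real A * (1 - ν.real A)) := by
  set g : α → ℝ := A.indicator 1
  have hg : Integrable g ν := (integrable_const 1).indicator hA
  have habs : ∀ t b, |g b - g t| = g b + g t - 2 * (g t * g b) := by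
    intro t b
    by_cases hb : b ∈ A <;> by_cases ht : t ∈ A <;> norm_num [g, hb, ht]
  have hinner : ∀ t, ∫ b, |g b - g t| ∂ν = ν.real A + g t - 2 * (g t * ν.real A) := by
    intro t
    simp_rw [habs t]
    rw [integral_sub (by fun_prop) (by fun_prop), integral_add hg (integrable_const _),
      integral_const_mul, integral_const_mul, integral_indicator_one hA]
    simp
  simp_rw [hinner]
  rw [integral_sub (by fun_prop) (by fun_prop), integral_add (integrable_const _) hg,
    integral_const_mul, integral_mul_const, integral_indicator_one hA]
  simp only [integral_const, probReal_univ, smul_eq_mul, one_mul]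
  ring

end UpdateCoordinate

theorem setIntegral_pos_of_continuous {X : Type*} [TopologicalSpace X] [MeasurableSpace X]
    [OpensMeasurableSpace X] {μ : Measure X} [μ.IsOpenPosMeasure] {s : Set X} {f : X → ℝ}
    (hs : s ⊆ closure (interior s)) (hf : Continuous f) (hfs : IntegrableOn f s μ) (hf0 : 0 ≤ f)
    {x₀ : X} (hx₀ : x₀ ∈ s) (hfx₀ : 0 < f x₀) : 0 < ∫ x in s, f x ∂μ := by
  rw [setIntegral_pos_iff_support_of_nonneg_ae (ae_of_all _ hf0) hfs]
  have hne : (support f ∩ interior s).Nonempty :=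
    mem_closure_iff.1 (hs hx₀) _ hf.isOpen_support hfx₀.ne'
  exact ((hf.isOpen_support.inter isOpen_interior).measure_pos μ hne).trans_le
    (measure_mono (inter_subset_inter_right _ interior_subset))

theorem IsPreconnected.exists_mem_Ioo {S : Set ℝ} (hS : IsPreconnected S) {a b L U : ℝ}
    (ha : a ∈ S) (hb : b ∈ S) (haL : L < a) (hbU : b < U) (hLU : L < U) :
    ∃ y ∈ S, y ∈ Ioo L U := by
  by_cases haU : a < U
  · exact ⟨a, ha, haL, haU⟩
  by_cases hbL : L < b
  · exact ⟨b, hb, hbL, hbU⟩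
  exact ⟨(L + U) / 2, hS.Icc_subset hb ha ⟨by linarith, by linarith⟩, by linarith, by linarith⟩

theorem isCompact_unitCube (n : ℕ) : IsCompact (unitCube n) :=
  isCompact_univ_pi fun _ => isCompact_Icc

theorem Continuous.integrableOn_unitCube {n : ℕ} {f : (Fin n → ℝ) → ℝ} (hf : Continuous f) :
    IntegrableOn f (unitCube n) :=
  hf.continuousOn.integrableOn_compact (isCompact_unitCube n)

theorem closure_interior_unitCube (n : ℕ) : closure (interior (unitCube n)) = unitCube n := by
  rw [unitCube, interior_pi_set finite_univ, closure_pi_set, interior_Icc, closure_Ioo zero_ne_one]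

theorem volume_restrict_unitCube (n : ℕ) :
    volume.restrict (unitCube n) = Measure.pi fun _ => volume.restrict (Icc (0 : ℝ) 1) :=
  Measure.restrict_pi_pi _ _

instance : IsProbabilityMeasure (volume.restrict (Icc (0 : ℝ) 1)) := ⟨by simp⟩

noncomputable def clamp01 (u : ℝ) : ℝ := max 0 (min 1 u)

theorem clamp01_of_nonpos {u : ℝ} (h : u ≤ 0) : clamp01 u = 0 := by
  simp [clamp01, h, h.trans zero_le_one]

theorem clamp01_of_one_le {u : ℝ} (h : 1 ≤ u) : clamp01 u = 1 := by
  simp [clamp01, h]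

theorem clamp01_of_mem_Icc {u : ℝ} (h0 : 0 ≤ u) (h1 : u ≤ 1) : clamp01 u = u := by
  simp [clamp01, h0, h1]

theorem clamp01_one_sub (u : ℝ) : clamp01 (1 - u) = 1 - clamp01 u := by
  rcases le_total u 0 with h | h
  · rw [clamp01_of_nonpos h, clamp01_of_one_le (by linarith)]
    ring
  rcases le_total u 1 with h' | h'
  · rw [clamp01_of_mem_Icc h h', clamp01_of_mem_Icc (by linarith) (by linarith)]
  · rw [clamp01_of_one_le h', clamp01_of_nonpos (by linarith)]
    ring

theorem continuous_clamp01 : Continuous clamp01 := by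
  unfold clamp01
  fun_prop

theorem uniform_real_Iic (u : ℝ) : (volume.restrict (Icc (0 : ℝ) 1)).real (Iic u) = clamp01 u := by
  have : Iic u ∩ Icc 0 1 = Icc 0 (min 1 u) := by ext; simp; tauto
  rw [measureReal_restrict_apply measurableSet_Iic, this, Real.volume_real_Icc, clamp01, sub_zero,
    max_comm]

theorem uniform_real_Ici (u : ℝ) :
    (volume.restrict (Icc (0 : ℝ) 1)).real (Ici u) = 1 - clamp01 u := by
  have : Ici u ∩ Icc 0 1 = Icc (max 0 u) 1 := by ext; simp; tauto
  rw [measureReal_restrict_apply measurableSet_Ici, this, Real.volume_real_Icc, ← clamp01_one_sub,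
    clamp01, max_comm, ← min_sub_sub_left, sub_zero]

noncomputable def bernoulliVar (u : ℝ) : ℝ := clamp01 u * (1 - clamp01 u)

theorem continuous_bernoulliVar : Continuous bernoulliVar := by
  have := continuous_clamp01
  unfold bernoulliVar
  fun_prop

theorem bernoulliVar_of_nonpos {u : ℝ} (h : u ≤ 0) : bernoulliVar u = 0 := by
  simp [bernoulliVar, clamp01_of_nonpos h]

theorem bernoulliVar_of_one_le {u : ℝ} (h : 1 ≤ u) : bernoulliVar u = 0 := by
  simp [bernoulliVar, clamp01_of_one_le h]

theorem bernoulliVar_of_mem_Icc {u : ℝ} (h0 : 0 ≤ u) (h1 : u ≤ 1) :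
    bernoulliVar u = u * (1 - u) := by
  rw [bernoulliVar, clamp01_of_mem_Icc h0 h1]

theorem bernoulliVar_one_sub (u : ℝ) : bernoulliVar (1 - u) = bernoulliVar u := by
  rw [bernoulliVar, bernoulliVar, clamp01_one_sub]
  ring

theorem bernoulliVar_div_eq_uniform {a : ℝ} (ha : a ≠ 0) (r : ℝ) :
    bernoulliVar (r / a) = (volume.restrict (Icc (0 : ℝ) 1)).real {s | r ≤ a * s}
      * (1 - (volume.restrict (Icc (0 : ℝ) 1)).real {s | r ≤ a * s}) := by
  rcases ha.lt_or_gt with ha' | ha'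
  · have : {s | r ≤ a * s} = Iic (r / a) := by ext s; simp [le_div_iff_of_neg ha', mul_comm]
    rw [this, uniform_real_Iic, bernoulliVar]
  · have : {s | r ≤ a * s} = Ici (r / a) := by ext s; simp [div_le_iff₀ ha', mul_comm]
    rw [this, uniform_real_Ici, bernoulliVar]
    ring

noncomputable def bernoulliVarPrim (x : ℝ) : ℝ := ∫ u in (0 : ℝ)..x, bernoulliVar u

theorem continuous_bernoulliVarPrim : Continuous bernoulliVarPrim :=
  intervalIntegral.continuous_primitive
    (fun _ _ => continuous_bernoulliVar.intervalIntegrable _ _) 0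

theorem integral_bernoulliVar (a b : ℝ) :
    ∫ u in a..b, bernoulliVar u = bernoulliVarPrim b - bernoulliVarPrim a :=
  (intervalIntegral.integral_interval_sub_left (continuous_bernoulliVar.intervalIntegrable _ _)
    (continuous_bernoulliVar.intervalIntegrable _ _)).symm

theorem bernoulliVarPrim_of_nonpos {x : ℝ} (h : x ≤ 0) : bernoulliVarPrim x = 0 := by
  rw [bernoulliVarPrim, intervalIntegral.integral_congr (g := 0) fun u hu => ?_]
  · simp
  · rw [uIcc_of_ge h] at hu
    exact bernoulliVar_of_nonpos hu.2

theorem bernoulliVarPrim_of_mem_Icc {x : ℝ} (h0 : 0 ≤ x) (h1 : x ≤ 1) :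
    bernoulliVarPrim x = x ^ 2 / 2 - x ^ 3 / 3 := by
  rw [bernoulliVarPrim, intervalIntegral.integral_congr (g := fun u => u - u ^ 2) fun u hu => ?_]
  · simp [integral_id, integral_pow]
    ring
  · rw [uIcc_of_le h0] at hu
    rw [bernoulliVar_of_mem_Icc hu.1 (hu.2.trans h1)]
    ring

theorem bernoulliVarPrim_of_one_le {x : ℝ} (h : 1 ≤ x) : bernoulliVarPrim x = 1 / 6 := by
  have hzero : ∫ u in (1 : ℝ)..x, bernoulliVar u = 0 := by
    rw [intervalIntegral.integral_congr (g := 0) fun u hu => ?_]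
    · simp
    · rw [uIcc_of_le h] at hu
      exact bernoulliVar_of_one_le hu.1
  rw [integral_bernoulliVar, bernoulliVarPrim_of_mem_Icc zero_le_one le_rfl] at hzero
  linarith

/-- If features of weights `a` and `b` face the threshold `c` left by the other features, then
`2 * pairVar a b c` is the influence of the first one averaged over the second coordinate. -/
noncomputable def pairVar (a b c : ℝ) : ℝ := ∫ y in (0 : ℝ)..1, bernoulliVar ((c - b * y) / a)

noncomputable def pairVarGap (a b c : ℝ) : ℝ := pairVar a b c - pairVar b a c

theorem pairVar_eq {a b : ℝ} (ha : a ≠ 0) (hb : b ≠ 0) (c : ℝ) :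
    pairVar a b c = a / b * (bernoulliVarPrim (c / a) - bernoulliVarPrim ((c - b) / a)) := by
  have hlin : ∀ y, (c - b * y) / a = -b / a * y + c / a := fun y => by ring
  simp_rw [pairVar, hlin]
  rw [intervalIntegral.integral_comp_mul_add _ (div_ne_zero (neg_ne_zero.2 hb) ha),
    integral_bernoulliVar, smul_eq_mul, inv_div, mul_zero, zero_add]
  field_simp
  ring_nf

theorem pairVarGap_eq {a b : ℝ} (ha : a ≠ 0) (hb : b ≠ 0) (c : ℝ) :
    pairVarGap a b c = a / b * (bernoulliVarPrim (c / a) - bernoulliVarPrim ((c - b) / a))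
      - b / a * (bernoulliVarPrim (c / b) - bernoulliVarPrim ((c - a) / b)) := by
  rw [pairVarGap, pairVar_eq ha hb, pairVar_eq hb ha]

theorem continuous_pairVar {a b : ℝ} (ha : a ≠ 0) (hb : b ≠ 0) : Continuous (pairVar a b) := by
  have := continuous_bernoulliVarPrim
  simp_rw [funext (pairVar_eq ha hb)]
  fun_prop

theorem continuous_pairVarGap {a b : ℝ} (ha : a ≠ 0) (hb : b ≠ 0) :
    Continuous (pairVarGap a b) :=
  (continuous_pairVar ha hb).sub (continuous_pairVar hb ha)

theorem pairVar_neg_left {a : ℝ} (ha : a ≠ 0) (b c : ℝ) :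
    pairVar (-a) b c = pairVar a b (c + a) := by
  refine intervalIntegral.integral_congr fun y _ => ?_
  rw [← bernoulliVar_one_sub]
  congr 1
  field_simp
  ring

theorem pairVar_neg_right {a b : ℝ} (ha : a ≠ 0) (hb : b ≠ 0) (c : ℝ) :
    pairVar a (-b) c = pairVar a b (c + b) := by
  rw [pairVar_eq ha (neg_ne_zero.2 hb), pairVar_eq ha hb, add_sub_cancel_right, sub_neg_eq_add,
    div_neg, neg_mul, ← mul_neg, neg_sub]

section PairVarGap

variable {a b c : ℝ}

theorem pairVarGap_neg_left (ha : a ≠ 0) (hb : b ≠ 0) (c : ℝ) :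
    pairVarGap (-a) b c = pairVarGap a b (c + a) := by
  rw [pairVarGap, pairVarGap, pairVar_neg_left ha, pairVar_neg_right hb ha]

theorem pairVarGap_neg_right (ha : a ≠ 0) (hb : b ≠ 0) (c : ℝ) :
    pairVarGap a (-b) c = pairVarGap a b (c + b) := by
  rw [pairVarGap, pairVarGap, pairVar_neg_left hb, pairVar_neg_right ha hb]

theorem pairVarGap_abs_left (ha : a ≠ 0) (hb : b ≠ 0) (c : ℝ) :
    pairVarGap a b c = pairVarGap |a| b (c - min a 0) := by
  rcases ha.lt_or_gt with ha' | ha'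
  · rw [abs_of_neg ha', min_eq_left ha'.le, pairVarGap_neg_left ha hb, sub_add_cancel]
  · rw [abs_of_pos ha', min_eq_right ha'.le, sub_zero]

theorem pairVarGap_abs_right (ha : a ≠ 0) (hb : b ≠ 0) (c : ℝ) :
    pairVarGap a b c = pairVarGap a |b| (c - min b 0) := by
  rcases hb.lt_or_gt with hb' | hb'
  · rw [abs_of_neg hb', min_eq_left hb'.le, pairVarGap_neg_right ha hb, sub_add_cancel]
  · rw [abs_of_pos hb', min_eq_right hb'.le, sub_zero]

theorem pairVarGap_eq_abs (ha : a ≠ 0) (hb : b ≠ 0) (c : ℝ) :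
    pairVarGap a b c = pairVarGap |a| |b| (c - min a 0 - min b 0) := by
  rw [pairVarGap_abs_left ha hb, pairVarGap_abs_right (abs_ne_zero.2 ha) hb]

theorem pairVarGap_of_nonpos (ha : 0 < a) (hb : 0 < b) (hc : c ≤ 0) : pairVarGap a b c = 0 := by
  rw [pairVarGap_eq ha.ne' hb.ne',
    bernoulliVarPrim_of_nonpos (div_nonpos_of_nonpos_of_nonneg hc ha.le),
    bernoulliVarPrim_of_nonpos (div_nonpos_of_nonpos_of_nonneg (by linarith) ha.le),
    bernoulliVarPrim_of_nonpos (div_nonpos_of_nonpos_of_nonneg hc hb.le),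
    bernoulliVarPrim_of_nonpos (div_nonpos_of_nonpos_of_nonneg (by linarith) hb.le)]
  ring

theorem pairVarGap_of_add_le (ha : 0 < a) (hb : 0 < b) (hc : a + b ≤ c) :
    pairVarGap a b c = 0 := by
  rw [pairVarGap_eq ha.ne' hb.ne', bernoulliVarPrim_of_one_le ((one_le_div ha).2 (by linarith)),
    bernoulliVarPrim_of_one_le ((one_le_div ha).2 (by linarith)),
    bernoulliVarPrim_of_one_le ((one_le_div hb).2 (by linarith)),
    bernoulliVarPrim_of_one_le ((one_le_div hb).2 (by linarith))]
  ring

theorem pairVarGap_of_mem_Icc_zero_b (hb : 0 < b) (hba : b ≤ a) (h0 : 0 ≤ c) (h1 : c ≤ b) :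
    pairVarGap a b c = c ^ 3 * (a - b) / (3 * a ^ 2 * b ^ 2) := by
  have ha : 0 < a := hb.trans_le hba
  rw [pairVarGap_eq ha.ne' hb.ne',
    bernoulliVarPrim_of_mem_Icc (div_nonneg h0 ha.le) ((div_le_one ha).2 (by linarith)),
    bernoulliVarPrim_of_nonpos (div_nonpos_of_nonpos_of_nonneg (by linarith) ha.le),
    bernoulliVarPrim_of_mem_Icc (div_nonneg h0 hb.le) ((div_le_one hb).2 h1),
    bernoulliVarPrim_of_nonpos (div_nonpos_of_nonpos_of_nonneg (by linarith) hb.le)]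
  field_simp
  ring

theorem pairVarGap_of_mem_Icc_b_a (hb : 0 < b) (h0 : b ≤ c) (h1 : c ≤ a) :
    pairVarGap a b c = (6 * (c - b) * (a - c) + 2 * b * (a - b)) / (6 * a ^ 2) := by
  have ha : 0 < a := by linarith
  rw [pairVarGap_eq ha.ne' hb.ne',
    bernoulliVarPrim_of_mem_Icc (div_nonneg (by linarith) ha.le) ((div_le_one ha).2 h1),
    bernoulliVarPrim_of_mem_Icc (div_nonneg (by linarith) ha.le) ((div_le_one ha).2 (by linarith)),
    bernoulliVarPrim_of_one_le ((one_le_div hb).2 h0),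
    bernoulliVarPrim_of_nonpos (div_nonpos_of_nonpos_of_nonneg (by linarith) hb.le)]
  field_simp
  ring

theorem pairVarGap_of_mem_Icc_a_add_b (hb : 0 < b) (hba : b ≤ a) (h0 : a ≤ c) (h1 : c ≤ a + b) :
    pairVarGap a b c = (a + b - c) ^ 3 * (a - b) / (3 * a ^ 2 * b ^ 2) := by
  have ha : 0 < a := hb.trans_le hba
  rw [pairVarGap_eq ha.ne' hb.ne', bernoulliVarPrim_of_one_le ((one_le_div ha).2 h0),
    bernoulliVarPrim_of_mem_Icc (div_nonneg (by linarith) ha.le) ((div_le_one ha).2 (by linarith)),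
    bernoulliVarPrim_of_one_le ((one_le_div hb).2 (by linarith)),
    bernoulliVarPrim_of_mem_Icc (div_nonneg (by linarith) hb.le) ((div_le_one hb).2 (by linarith))]
  field_simp
  ring

theorem pairVarGap_nonneg_of_le (hb : 0 < b) (hba : b ≤ a) (c : ℝ) : 0 ≤ pairVarGap a b c := by
  have ha : 0 < a := hb.trans_le hba
  rcases le_or_gt c 0 with hc | hc
  · rw [pairVarGap_of_nonpos ha hb hc]
  rcases le_or_gt c b with hcb | hcb
  · rw [pairVarGap_of_mem_Icc_zero_b hb hba hc.le hcb]
    exact div_nonneg (mul_nonneg (by positivity) (sub_nonneg.2 hba)) (by positivity)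
  rcases le_or_gt c a with hca | hca
  · rw [pairVarGap_of_mem_Icc_b_a hb hcb.le hca]
    exact div_nonneg (by nlinarith) (by positivity)
  rcases le_or_gt c (a + b) with hcab | hcab
  · rw [pairVarGap_of_mem_Icc_a_add_b hb hba hca.le hcab]
    exact div_nonneg (mul_nonneg (pow_nonneg (by linarith) _) (sub_nonneg.2 hba)) (by positivity)
  · rw [pairVarGap_of_add_le ha hb hcab.le]

theorem pairVarGap_pos_of_lt (hb : 0 < b) (hba : b < a) (h0 : 0 < c) (h1 : c < a + b) :
    0 < pairVarGap a b c := by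
  have ha : 0 < a := hb.trans hba
  rcases le_or_gt c b with hcb | hcb
  · rw [pairVarGap_of_mem_Icc_zero_b hb hba.le h0.le hcb]
    exact div_pos (mul_pos (by positivity) (sub_pos.2 hba)) (by positivity)
  rcases le_or_gt c a with hca | hca
  · rw [pairVarGap_of_mem_Icc_b_a hb hcb.le hca]
    exact div_pos (by nlinarith) (by positivity)
  · rw [pairVarGap_of_mem_Icc_a_add_b hb hba.le hca.le h1.le]
    exact div_pos (mul_pos (pow_pos (by linarith) _) (sub_pos.2 hba)) (by positivity)

theorem pairVarGap_nonneg (ha : a ≠ 0) (hb : b ≠ 0) (h : |b| ≤ |a|) (c : ℝ) :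
    0 ≤ pairVarGap a b c := by
  rw [pairVarGap_eq_abs ha hb]
  exact pairVarGap_nonneg_of_le (abs_pos.2 hb) h _

theorem pairVarGap_pos (ha : a ≠ 0) (hb : b ≠ 0) (h : |b| < |a|)
    (hc : c ∈ Ioo (min a 0 + min b 0) (max a 0 + max b 0)) : 0 < pairVarGap a b c := by
  rw [pairVarGap_eq_abs ha hb]
  have hsa := max_sub_min_eq_abs a 0
  have hsb := max_sub_min_eq_abs b 0
  rw [zero_sub, abs_neg] at hsa hsb
  exact pairVarGap_pos_of_lt (abs_pos.2 hb) h (by linarith [hc.1]) (by linarith [hc.2])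

end PairVarGap

theorem ite_lt_zero_eq_min (a : ℝ) : (if a < 0 then a else 0) = min a 0 := by
  split_ifs with h
  · exact (min_eq_left h.le).symm
  · exact (min_eq_right (not_lt.1 h)).symm

theorem ite_pos_eq_max (a : ℝ) : (if 0 < a then a else 0) = max a 0 := by
  split_ifs with h
  · exact (max_eq_left h.le).symm
  · exact (max_eq_right (not_lt.1 h)).symm

theorem sum_mul_update {ι : Type*} [Fintype ι] [DecidableEq ι] (w x : ι → ℝ) (i : ι) (t : ℝ) :
    ∑ k, w k * update x i t k = ∑ k, w k * x k - w i * x i + w i * t := by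
  rw [← Finset.add_sum_erase _ _ (Finset.mem_univ i),
    ← Finset.add_sum_erase _ (fun k => w k * x k) (Finset.mem_univ i), update_self,
    Finset.sum_congr rfl fun k hk => by rw [update_of_ne (Finset.ne_of_mem_erase hk)]]
  ring

section Classifier

variable {n : ℕ} (w : Fin n → ℝ) (q : ℝ)

def pairThreshold (i j : Fin n) (x : Fin n → ℝ) : ℝ :=
  q - ∑ k, w k * x k + w i * x i + w j * x j

theorem pairThreshold_comm (i j : Fin n) : pairThreshold w q i j = pairThreshold w q j i := by
  ext x
  simp only [pairThreshold]
  ring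

theorem continuous_pairThreshold (i j : Fin n) : Continuous (pairThreshold w q i j) := by
  unfold pairThreshold
  fun_prop

theorem measurable_linClass : Measurable (linClass w q) :=
  Measurable.ite (measurableSet_le measurable_const (by fun_prop)) measurable_const measurable_const

theorem abs_linClass_sub_le_one (x y : Fin n → ℝ) : |linClass w q x - linClass w q y| ≤ 1 := by
  unfold linClass
  split_ifs <;> norm_num

theorem linClass_update (x : Fin n → ℝ) (i : Fin n) (t : ℝ) :
    linClass w q (update x i t)
      = {s | q - ∑ k, w k * x k + w i * x i ≤ w i * s}.indicator 1 t := by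
  simp only [linClass, indicator_apply, mem_ofPred_eq, sum_mul_update, Pi.one_apply]
  exact if_congr ⟨fun h => by linarith, fun h => by linarith⟩ rfl rfl

theorem chiLin_eq_integral_bernoulliVar {i : Fin n} (hwi : w i ≠ 0) :
    chiLin w q i
      = ∫ x in unitCube n, 2 * bernoulliVar ((q - ∑ k, w k * x k + w i * x i) / w i) := by
  set Ψ : (Fin n → ℝ) × ℝ → ℝ := fun p => |linClass w q (update p.1 i p.2) - linClass w q p.1|
  have hΨm : Measurable Ψ := by
    have := measurable_linClass w q
    fun_prop
  have hΨb : ∀ p, ‖Ψ p‖ ≤ 1 := fun p => by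
    simpa [Ψ] using abs_linClass_sub_le_one w q (update p.1 i p.2) p.1
  rw [chiLin, volume_restrict_unitCube]
  set ν := volume.restrict (Icc (0 : ℝ) 1)
  have hΨ : Integrable Ψ ((Measure.pi fun _ => ν).prod ν) :=
    .of_bound hΨm.aestronglyMeasurable 1 (ae_of_all _ hΨb)
  rw [integral_integral_swap (f := fun b x => Ψ (x, b)) hΨ.swap,
    integral_eq_integral_integral_update _ hΨ.integral_prod_left i]
  refine integral_congr_ae (ae_of_all _ fun x => ?_)
  simp_rw [Ψ, update_idem, linClass_update]
  rw [integral_integral_abs_indicator_sub _ (measurableSet_le measurable_const (by fun_prop)),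
    bernoulliVar_div_eq_uniform hwi]

theorem chiLin_eq_integral_pairVar {i j : Fin n} (hij : i ≠ j) (hwi : w i ≠ 0) :
    chiLin w q i = ∫ x in unitCube n, 2 * pairVar (w i) (w j) (pairThreshold w q i j x) := by
  have hf : IntegrableOn (fun x => 2 * bernoulliVar ((q - ∑ k, w k * x k + w i * x i) / w i))
      (unitCube n) := by
    have := continuous_bernoulliVar
    exact Continuous.integrableOn_unitCube (by fun_prop)
  rw [chiLin_eq_integral_bernoulliVar w q hwi, volume_restrict_unitCube,
    integral_eq_integral_integral_update _ (volume_restrict_unitCube n ▸ hf) j]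
  refine integral_congr_ae (ae_of_all _ fun x => ?_)
  simp only [sum_mul_update, update_of_ne hij]
  rw [integral_const_mul, pairVar, intervalIntegral.integral_of_le zero_le_one,
    ← integral_Icc_eq_integral_Ioc, pairThreshold]
  congr with t
  ring_nf

theorem chiLin_sub_chiLin {i j : Fin n} (hij : i ≠ j) (hwi : w i ≠ 0) (hwj : w j ≠ 0) :
    chiLin w q i - chiLin w q j
      = ∫ x in unitCube n, 2 * pairVarGap (w i) (w j) (pairThreshold w q i j x) := by
  have hint : ∀ {a b : ℝ}, a ≠ 0 → b ≠ 0 → IntegrableOn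
      (fun x => 2 * pairVar a b (pairThreshold w q i j x)) (unitCube n) := fun ha hb =>
    Continuous.integrableOn_unitCube
      (continuous_const.mul ((continuous_pairVar ha hb).comp (continuous_pairThreshold w q i j)))
  rw [chiLin_eq_integral_pairVar w q hij hwi, chiLin_eq_integral_pairVar w q hij.symm hwj,
    pairThreshold_comm w q j i, ← integral_sub (hint hwi hwj) (hint hwj hwi)]
  simp_rw [pairVarGap, mul_sub]

theorem exists_mem_unitCube_pairThreshold_mem_Ioo {i : Fin n} (hwi : w i ≠ 0) (j : Fin n)
    (hq₁ : ∑ k ∈ Finset.univ.filter (fun k => w k < 0), w k < q)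
    (hq₂ : q < ∑ k ∈ Finset.univ.filter (fun k => 0 < w k), w k) :
    ∃ x ∈ unitCube n,
      pairThreshold w q i j x ∈ Ioo (min (w i) 0 + min (w j) 0) (max (w i) 0 + max (w j) 0) := by
  set c := pairThreshold w q i j
  have hconn : IsPreconnected (c '' unitCube n) := (isPreconnected_univ_pi fun _ =>
    isPreconnected_Icc).image _ (continuous_pairThreshold w q i j).continuousOn
  have hvertex : ∀ p : ℝ → Prop, [DecidablePred p] →
      (fun k => if p (w k) then (1 : ℝ) else 0) ∈ unitCube n :=
    fun p _ k _ => by dsimp only; split_ifs <;> simp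
  have hneg : c (fun k => if w k < 0 then 1 else 0)
      = q - ∑ k ∈ Finset.univ.filter (fun k => w k < 0), w k + min (w i) 0 + min (w j) 0 := by
    simp only [c, pairThreshold, mul_ite, mul_one, mul_zero, Finset.sum_filter, ite_lt_zero_eq_min]
  have hpos : c (fun k => if 0 < w k then 1 else 0)
      = q - ∑ k ∈ Finset.univ.filter (fun k => 0 < w k), w k + max (w i) 0 + max (w j) 0 := by
    simp only [c, pairThreshold, mul_ite, mul_one, mul_zero, Finset.sum_filter, ite_pos_eq_max]
  obtain ⟨_, ⟨x, hx, rfl⟩, h⟩ := hconn.exists_mem_Ioo (L := min (w i) 0 + min (w j) 0)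
    (U := max (w i) 0 + max (w j) 0) (mem_image_of_mem c (hvertex (· < 0)))
    (mem_image_of_mem c (hvertex (0 < ·))) (by rw [hneg]; linarith) (by rw [hpos]; linarith)
    (add_lt_add_of_lt_of_le (min_lt_max.2 hwi) min_le_max)
  exact ⟨x, hx, h⟩

theorem chiLin_le_of_abs_le {i j : Fin n} (hwi : w i ≠ 0) (hwj : w j ≠ 0) (h : |w j| ≤ |w i|) :
    chiLin w q j ≤ chiLin w q i := by
  rcases eq_or_ne i j with rfl | hij
  · rfl
  rw [← sub_nonneg, chiLin_sub_chiLin w q hij hwi hwj]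
  exact integral_nonneg fun x => mul_nonneg zero_le_two (pairVarGap_nonneg hwi hwj h _)

theorem chiLin_lt_of_abs_lt {i j : Fin n} (hwi : w i ≠ 0) (hwj : w j ≠ 0)
    (hq₁ : ∑ k ∈ Finset.univ.filter (fun k => w k < 0), w k < q)
    (hq₂ : q < ∑ k ∈ Finset.univ.filter (fun k => 0 < w k), w k) (h : |w j| < |w i|) :
    chiLin w q j < chiLin w q i := by
  have hij : i ≠ j := by rintro rfl; exact h.false
  rw [← sub_pos, chiLin_sub_chiLin w q hij hwi hwj]
  obtain ⟨x₀, hx₀, hc⟩ := exists_mem_unitCube_pairThreshold_mem_Ioo w q hwi j hq₁ hq₂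
  have hcont : Continuous fun x => 2 * pairVarGap (w i) (w j) (pairThreshold w q i j x) :=
    continuous_const.mul ((continuous_pairVarGap hwi hwj).comp (continuous_pairThreshold w q i j))
  exact setIntegral_pos_of_continuous (closure_interior_unitCube n).symm.subset hcont
    hcont.integrableOn_unitCube (fun x => mul_nonneg zero_le_two (pairVarGap_nonneg hwi hwj h.le _))
    hx₀ (mul_pos two_pos (pairVarGap_pos hwi hwj h hc))

end Classifier

theorem chiLin_ge_iff_abs_weight_ge_general
    {n : ℕ} (w : Fin n → ℝ) (q : ℝ)
    (hw : ∀ k, w k ≠ 0)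
    (hq₁ : ∑ k ∈ Finset.univ.filter (fun k => w k < 0), w k < q)
    (hq₂ : q < ∑ k ∈ Finset.univ.filter (fun k => 0 < w k), w k)
    (i j : Fin n) :
    chiLin w q i ≥ chiLin w q j ↔ |w i| ≥ |w j| :=
  ⟨fun h => not_lt.1 fun hlt => (chiLin_lt_of_abs_lt w q (hw j) (hw i) hq₁ hq₂ hlt).not_ge h,
    chiLin_le_of_abs_le w q (hw i) (hw j)⟩

/-- For a non-degenerate linear classifier, χ_i ≥ χ_j iff
|w_i| ≥ |w_j|. -/
theorem chiLin_ge_iff_abs_weight_ge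
    {n : ℕ} (hn : 1 ≤ n) (w : Fin n → ℝ) (q : ℝ)
    (hw : ∀ k, w k ≠ 0)
    (hq₁ : ∑ k ∈ Finset.univ.filter (fun k => w k < 0), w k < q)
    (hq₂ : q < ∑ k ∈ Finset.univ.filter (fun k => 0 < w k), w k)
    (i j : Fin n) :
    chiLin w q i ≥ chiLin w q j ↔ |w i| ≥ |w j| :=
  chiLin_ge_iff_abs_weight_ge_general w q hw hq₁ hq₂ i j
end

section
/- Let v be a linear classifier on [0,1]^n with weights w and threshold q. If w_i ≥ w_j > 0 then Vol(Piv_j) ≤ Vol(Piv_i). -/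
open MeasureTheory intervalIntegral ENNReal



open MeasureTheory

/-- Piv_i(b): points of the cube that are losing but become winning when
coordinate i is set to b. -/
noncomputable def pivSet {n : ℕ} (w : Fin n → ℝ) (q : ℝ) (i : Fin n) (b : ℝ) :
    Set (Fin n → ℝ) :=
  {x | x ∈ unitCube n ∧ linClass w q x = 0 ∧
    linClass w q (Function.update x i b) = 1}

/-- Piv_i ⊆ [0,1]^{n+1}: pairs (x, b) with x ∈ Piv_i(b). -/
noncomputable def piv {n : ℕ} (w : Fin n → ℝ) (q : ℝ) (i : Fin n) :
    Set ((Fin n → ℝ) × ℝ) :=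
  {p | p.2 ∈ Set.Icc (0 : ℝ) 1 ∧ p.1 ∈ pivSet w q i p.2}

open MeasureTheory intervalIntegral

noncomputable def clampR (r : ℝ) : ℝ := max 0 (min r 1)

noncomputable def Gr (r : ℝ) : ℝ := clampR r * (1 - clampR r)

noncomputable def Hr (x : ℝ) : ℝ := ∫ t in (0:ℝ)..x, Gr t

lemma continuous_clampR : Continuous clampR :=
  continuous_const.max (continuous_id.min continuous_const)

lemma continuous_Gr : Continuous Gr :=
  continuous_clampR.mul (continuous_const.sub continuous_clampR)

lemma clampR_nonneg (r : ℝ) : 0 ≤ clampR r := le_max_left _ _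
lemma clampR_le_one (r : ℝ) : clampR r ≤ 1 := max_le zero_le_one (min_le_right _ _)

lemma Gr_nonneg (r : ℝ) : 0 ≤ Gr r :=
  mul_nonneg (clampR_nonneg r) (by linarith [clampR_le_one r])

lemma clampR_of_nonpos {r : ℝ} (h : r ≤ 0) : clampR r = 0 :=
  max_eq_left (min_le_of_left_le h)

lemma clampR_of_mem {r : ℝ} (h0 : 0 ≤ r) (h1 : r ≤ 1) : clampR r = r := by
  simp [clampR, min_eq_left h1, max_eq_right h0]

lemma clampR_of_ge {r : ℝ} (h : 1 ≤ r) : clampR r = 1 := by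
  simp [clampR, min_eq_right h]

lemma Gr_of_nonpos {r : ℝ} (h : r ≤ 0) : Gr r = 0 := by simp [Gr, clampR_of_nonpos h]
lemma Gr_of_ge {r : ℝ} (h : 1 ≤ r) : Gr r = 0 := by simp [Gr, clampR_of_ge h]
lemma Gr_of_mem {r : ℝ} (h0 : 0 ≤ r) (h1 : r ≤ 1) : Gr r = r * (1 - r) := by
  simp [Gr, clampR_of_mem h0 h1]

lemma hasDerivAt_Hr (x : ℝ) : HasDerivAt Hr (Gr x) x :=
  integral_hasDerivAt_right (continuous_Gr.intervalIntegrable _ _)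
    (continuous_Gr.stronglyMeasurableAtFilter _ _) continuous_Gr.continuousAt

lemma Hr_of_nonpos {x : ℝ} (h : x ≤ 0) : Hr x = 0 := by
  rw [Hr, integral_symm, intervalIntegral.integral_of_le h, neg_eq_zero]
  rw [MeasureTheory.setIntegral_congr_fun measurableSet_Ioc
    (fun t ht => Gr_of_nonpos ht.2)]
  simp

lemma Hr_of_mem {x : ℝ} (h0 : 0 ≤ x) (h1 : x ≤ 1) : Hr x = x^2/2 - x^3/3 := by
  rw [Hr, intervalIntegral.integral_congr (g := fun t => t - t^2) ?_]
  · rw [intervalIntegral.integral_sub (Continuous.intervalIntegrable (by continuity) _ _)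
      (Continuous.intervalIntegrable (by continuity) _ _)]
    simp [integral_id, integral_pow]
    ring
  · intro t ht
    rw [Set.uIcc_of_le h0] at ht
    have : Gr t = t * (1 - t) := Gr_of_mem ht.1 (ht.2.trans h1)
    simpa [this] using by ring

lemma Hr_one : Hr 1 = 1/6 := by
  rw [Hr_of_mem zero_le_one le_rfl]; norm_num

lemma Hr_of_ge {x : ℝ} (h : 1 ≤ x) : Hr x = 1/6 := by
  have : Hr x - Hr 1 = ∫ t in (1:ℝ)..x, Gr t :=
    intervalIntegral.integral_interval_sub_left
      (continuous_Gr.intervalIntegrable _ _) (continuous_Gr.intervalIntegrable _ _)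
  have h2 : (∫ t in (1:ℝ)..x, Gr t) = 0 := by
    rw [intervalIntegral.integral_of_le h,
      MeasureTheory.setIntegral_congr_fun measurableSet_Ioc (fun t ht => Gr_of_ge ht.1.le)]
    simp
  have := this.trans h2
  rw [Hr_one] at this
  linarith

lemma integral_Gr_affine {m W a : ℝ} (hm : 0 < m) (hW : 0 < W) :
    ∫ t in (0:ℝ)..1, Gr ((a - m * t)/W) = (W/m) * (Hr (a/W) - Hr ((a-m)/W)) := by
  have hderiv : ∀ t ∈ Set.uIcc (0:ℝ) 1, HasDerivAt (fun t => -(W/m) * Hr ((a - m*t)/W))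
      (Gr ((a - m*t)/W)) t := by
    intro t _
    have hinner : HasDerivAt (fun t : ℝ => (a - m*t)/W) (-m/W) t := by
      have : HasDerivAt (fun t : ℝ => a - m*t) (-m) t := by
        simpa using (hasDerivAt_id t).const_mul m |>.const_sub a
      exact this.div_const W
    have := ((hasDerivAt_Hr ((a - m*t)/W)).comp t hinner).const_mul (-(W/m))
    refine this.congr_deriv ?_
    field_simp
  have hint : IntervalIntegrable (fun t => Gr ((a - m*t)/W)) volume 0 1 :=
    (continuous_Gr.comp (by continuity)).intervalIntegrable _ _
  rw [intervalIntegral.integral_eq_sub_of_hasDerivAt hderiv hint]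
  ring_nf

lemma key_alg {a α β : ℝ} (hβ : 0 < β) (hαβ : β ≤ α) :
    (β/α) * (Hr (a/β) - Hr ((a-α)/β)) ≤ (α/β) * (Hr (a/α) - Hr ((a-β)/α)) := by
  have hα : 0 < α := lt_of_lt_of_le hβ hαβ
  rcases le_or_gt a 0 with ha | ha
  · rw [Hr_of_nonpos (div_nonpos_of_nonpos_of_nonneg ha hβ.le),
      Hr_of_nonpos (div_nonpos_of_nonpos_of_nonneg (by linarith) hβ.le),
      Hr_of_nonpos (div_nonpos_of_nonpos_of_nonneg ha hα.le),
      Hr_of_nonpos (div_nonpos_of_nonpos_of_nonneg (by linarith) hα.le)]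
    simp
  rcases le_or_gt a β with hab | hab
  · rw [Hr_of_mem (by positivity) ((div_le_one hβ).2 hab),
      Hr_of_nonpos (div_nonpos_of_nonpos_of_nonneg (by linarith) hβ.le),
      Hr_of_mem (by positivity) ((div_le_one hα).2 (by linarith)),
      Hr_of_nonpos (div_nonpos_of_nonpos_of_nonneg (by linarith) hα.le)]
    rw [div_pow, div_pow, div_pow, div_pow]
    rw [div_mul_eq_mul_div, div_mul_eq_mul_div, div_le_div_iff₀ hα hβ]
    field_simp
    nlinarith [mul_nonneg (mul_nonneg (pow_pos ha 3).le (sub_nonneg.2 hαβ))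
      (mul_pos (pow_pos hα 4) (pow_pos hβ 4)).le,
      mul_nonneg (pow_pos ha 3).le (sub_nonneg.2 hαβ)]
  rcases le_or_gt a α with haa | haa
  · rw [Hr_of_ge ((one_le_div hβ).2 hab.le),
      Hr_of_nonpos (div_nonpos_of_nonpos_of_nonneg (by linarith) hβ.le),
      Hr_of_mem (by positivity) ((div_le_one hα).2 haa),
      Hr_of_mem (div_nonneg (by linarith) hα.le) ((div_le_one hα).2 (by linarith))]
    have h1 : β/α ≤ 1 := (div_le_one hα).2 hαβ
    rw [div_pow, div_pow, div_pow, div_pow]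
    field_simp
    nlinarith [mul_nonneg (mul_nonneg (sub_nonneg.2 haa) hβ.le)
        (mul_pos (pow_pos hα 4) hβ).le,
      mul_nonneg (mul_nonneg (sub_nonneg.2 hab.le) (sub_nonneg.2 haa))
        (mul_pos (pow_pos hα 4) hβ).le,
      mul_nonneg (mul_nonneg (sub_nonneg.2 hab.le) hβ.le)
        (mul_pos (pow_pos hα 4) hβ).le,
      mul_nonneg (mul_nonneg (sub_nonneg.2 hab.le) (sub_nonneg.2 haa)) hβ.le,
      mul_nonneg (mul_nonneg hβ.le hβ.le) (sub_nonneg.2 hαβ)]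
  rcases le_or_gt a (α + β) with hs | hs
  · rw [Hr_of_ge ((one_le_div hβ).2 (by linarith)),
      Hr_of_mem (div_nonneg (by linarith) hβ.le) ((div_le_one hβ).2 (by linarith)),
      Hr_of_ge ((one_le_div hα).2 haa.le),
      Hr_of_mem (div_nonneg (by linarith) hα.le) ((div_le_one hα).2 (by linarith))]
    rw [div_pow, div_pow, div_pow, div_pow]
    field_simp
    nlinarith [mul_nonneg (mul_nonneg (pow_nonneg (sub_nonneg.2 hs) 3) (sub_nonneg.2 hαβ))
      (mul_pos (pow_pos hα 4) (pow_pos hβ 4)).le,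
      mul_nonneg (pow_nonneg (sub_nonneg.2 hs) 3) (sub_nonneg.2 hαβ)]
  · rw [Hr_of_ge ((one_le_div hβ).2 (by linarith)),
      Hr_of_ge ((one_le_div hβ).2 (by linarith)),
      Hr_of_ge ((one_le_div hα).2 (by linarith)),
      Hr_of_ge ((one_le_div hα).2 (by linarith))]
    simp

lemma lint_Gr_affine {m W a : ℝ} (hm : 0 < m) (hW : 0 < W) :
    ∫⁻ t in Set.Icc (0:ℝ) 1, ENNReal.ofReal (Gr ((a - m * t)/W)) =
      ENNReal.ofReal ((W/m) * (Hr (a/W) - Hr ((a-m)/W))) := by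
  have hcont : Continuous fun t : ℝ => Gr ((a - m * t)/W) :=
    continuous_Gr.comp (by continuity)
  rw [← Measure.restrict_congr_set (μ := (volume : Measure ℝ)) Ioc_ae_eq_Icc,
    ← ofReal_integral_eq_lintegral_ofReal hcont.integrableOn_Ioc
      (Filter.Eventually.of_forall fun t => Gr_nonneg _),
    ← intervalIntegral.integral_of_le zero_le_one, integral_Gr_affine hm hW]

lemma key_lint {a α β : ℝ} (hβ : 0 < β) (hαβ : β ≤ α) :
    ∫⁻ s in Set.Icc (0:ℝ) 1, ENNReal.ofReal (Gr ((a - α * s)/β)) ≤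
      ∫⁻ t in Set.Icc (0:ℝ) 1, ENNReal.ofReal (Gr ((a - β * t)/α)) := by
  have hα : 0 < α := lt_of_lt_of_le hβ hαβ
  rw [lint_Gr_affine hα hβ, lint_Gr_affine hβ hα]
  exact ENNReal.ofReal_le_ofReal (key_alg hβ hαβ)

section Geometry

open Finset

variable {n : ℕ} (w : Fin n → ℝ) (q : ℝ) (i j : Fin n)

/-- The sum of `w k * x k` over `k ≠ i`, `k ≠ j`. -/
noncomputable def cc (x : Fin n → ℝ) : ℝ :=
  ∑ k ∈ (Finset.univ.erase i).erase j, w k * x k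

lemma sum_mul_update_s7 (x : Fin n → ℝ) (b : ℝ) :
    ∑ k, w k * (Function.update x i b) k
      = w i * b + ∑ k ∈ Finset.univ.erase i, w k * x k := by
  rw [← Finset.add_sum_erase _ (fun k => w k * (Function.update x i b) k) (Finset.mem_univ i)]
  rw [Function.update_self]
  congr 1
  exact Finset.sum_congr rfl fun k hk => by
    rw [Function.update_of_ne (Finset.ne_of_mem_erase hk)]

lemma piv_eq : piv w q i =
    {p : (Fin n → ℝ) × ℝ | p.1 ∈ unitCube n ∧ p.2 ∈ Set.Icc (0:ℝ) 1 ∧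
      (∑ k, w k * p.1 k) < q ∧
      q ≤ w i * p.2 + ∑ k ∈ Finset.univ.erase i, w k * p.1 k} := by
  ext p
  simp only [piv, pivSet, Set.mem_setOf_eq, linClass]
  constructor
  · rintro ⟨h1, h2, h3, h4⟩
    refine ⟨h2, h1, ?_, ?_⟩
    · by_contra h
      rw [if_pos (not_lt.mp h)] at h3; norm_num at h3
    · by_contra h
      rw [sum_mul_update_s7, if_neg h] at h4; norm_num at h4
  · rintro ⟨h1, h2, h3, h4⟩
    refine ⟨h2, h1, ?_, ?_⟩
    · rw [if_neg (not_le.mpr h3)]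
    · rw [sum_mul_update_s7, if_pos h4]

lemma measurable_wsum (s : Finset (Fin n)) :
    Measurable fun x : Fin n → ℝ => ∑ k ∈ s, w k * x k :=
  Finset.measurable_sum _ fun k _ => by fun_prop

lemma measurableSet_unitCube : MeasurableSet (unitCube n) :=
  MeasurableSet.univ_pi fun _ => measurableSet_Icc

lemma measurableSet_piv : MeasurableSet (piv w q i) := by
  rw [piv_eq]
  apply MeasurableSet.inter
  · exact measurable_fst (measurableSet_unitCube)
  apply MeasurableSet.inter
  · exact measurable_snd measurableSet_Icc
  apply MeasurableSet.inter
  · exact measurableSet_lt ((measurable_wsum w Finset.univ).comp measurable_fst)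
      measurable_const
  · exact measurableSet_le measurable_const
      ((measurable_snd.const_mul (w i)).add
        (((measurable_wsum w (Finset.univ.erase i))).comp measurable_fst))

end Geometry

section Slice

open Finset

variable {n : ℕ} (w : Fin n → ℝ) (q : ℝ) (i : Fin n)

/-- The function on `ℝ^n` obtained from the indicator of `piv` by integrating out the
last (`b`) variable. -/
noncomputable def pivF : (Fin n → ℝ) → ℝ≥0∞ := fun x =>
  Set.indicator {y : Fin n → ℝ | y ∈ unitCube n ∧ (∑ k, w k * y k) < q}
    (fun y => ENNReal.ofReal
      (1 - max ((q - ∑ k ∈ Finset.univ.erase i, w k * y k) / w i) 0)) x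

lemma measurable_pivF : Measurable (pivF w q i) := by
  apply Measurable.indicator
  · exact (measurable_const.sub
      (((measurable_const.sub (measurable_wsum w _)).div_const _).max
        measurable_const)).ennreal_ofReal
  · exact (measurableSet_unitCube.inter
      (measurableSet_lt (measurable_wsum w Finset.univ) measurable_const))

lemma volume_slice (hi : 0 < w i) (x : Fin n → ℝ) :
    volume (Prod.mk x ⁻¹' piv w q i) = pivF w q i x := by
  by_cases hx : x ∈ unitCube n ∧ (∑ k, w k * x k) < q
  · have hset : Prod.mk x ⁻¹' piv w q i =
        Set.Icc (max ((q - ∑ k ∈ Finset.univ.erase i, w k * x k) / w i) 0) 1 := by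
      ext b
      rw [piv_eq]
      simp only [Set.mem_preimage, Set.mem_setOf_eq, Set.mem_Icc, max_le_iff]
      constructor
      · rintro ⟨-, ⟨hb0, hb1⟩, -, hq⟩
        exact ⟨⟨(div_le_iff₀ hi).2 (by linarith), hb0⟩, hb1⟩
      · rintro ⟨⟨hrb, hb0⟩, hb1⟩
        exact ⟨hx.1, ⟨hb0, hb1⟩, hx.2, by
          have := (div_le_iff₀ hi).1 hrb; linarith⟩
    rw [hset, Real.volume_Icc]
    exact (Set.indicator_of_mem (show x ∈ {y : Fin n → ℝ | y ∈ unitCube n ∧ (∑ k, w k * y k) < q} from hx) (fun y => ENNReal.ofReal (1 - max ((q - ∑ k ∈ Finset.univ.erase i, w k * y k) / w i) 0))).symm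
  · have hset : Prod.mk x ⁻¹' piv w q i = ∅ := by
      ext b
      rw [piv_eq]
      simp only [Set.mem_preimage, Set.mem_setOf_eq, Set.mem_empty_iff_false, iff_false]
      rintro ⟨h1, -, h3, -⟩
      exact hx ⟨h1, h3⟩
    rw [hset, measure_empty]
    exact (Set.indicator_of_notMem (show x ∉ {y : Fin n → ℝ | y ∈ unitCube n ∧ (∑ k, w k * y k) < q} from hx) (fun y => ENNReal.ofReal (1 - max ((q - ∑ k ∈ Finset.univ.erase i, w k * y k) / w i) 0))).symm

lemma vol_piv_eq (hi : 0 < w i) :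
    volume (piv w q i) = ∫⁻ x, pivF w q i x := by
  rw [MeasureTheory.Measure.volume_eq_prod, Measure.prod_apply (measurableSet_piv w q i)]
  exact lintegral_congr (volume_slice w q i hi)

end Slice

section Update

open Finset

variable {n : ℕ} (w : Fin n → ℝ) (q : ℝ) {i j : Fin n}

lemma cc_comm (x : Fin n → ℝ) : cc w j i x = cc w i j x := by
  unfold cc; rw [Finset.erase_right_comm]

lemma sum_erase_update (hji : j ≠ i) (x : Fin n → ℝ) (t : ℝ) :
    ∑ k ∈ Finset.univ.erase i, w k * (Function.update x j t) k
      = w j * t + cc w i j x := by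
  have hj : j ∈ Finset.univ.erase i := Finset.mem_erase.2 ⟨hji, Finset.mem_univ j⟩
  rw [← Finset.add_sum_erase _ (fun k => w k * (Function.update x j t) k) hj,
    Function.update_self]
  congr 1
  exact Finset.sum_congr rfl fun k hk => by
    rw [Function.update_of_ne (Finset.ne_of_mem_erase hk)]

lemma sum_erase_update₂ (hji : j ≠ i) (x : Fin n → ℝ) (t s : ℝ) :
    ∑ k ∈ Finset.univ.erase i, w k * (Function.update (Function.update x j t) i s) k
      = w j * t + cc w i j x := by
  rw [Finset.sum_congr rfl (fun k hk => by
    rw [Function.update_of_ne (Finset.ne_of_mem_erase hk)]),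
    sum_erase_update w hji x t]

lemma sum_update₂ (hji : j ≠ i) (x : Fin n → ℝ) (t s : ℝ) :
    ∑ k, w k * (Function.update (Function.update x j t) i s) k
      = w i * s + (w j * t + cc w i j x) := by
  rw [sum_mul_update_s7, sum_erase_update w hji x t]

lemma cube_update₂ (hij : i ≠ j) (x : Fin n → ℝ) (s t : ℝ) :
    Function.update (Function.update x j t) i s ∈ unitCube n ↔
      (s ∈ Set.Icc (0:ℝ) 1 ∧ t ∈ Set.Icc (0:ℝ) 1 ∧
        ∀ k, k ≠ i → k ≠ j → x k ∈ Set.Icc (0:ℝ) 1) := by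
  simp only [unitCube, Set.mem_univ_pi]
  constructor
  · intro h
    refine ⟨?_, ?_, fun k hk1 hk2 => ?_⟩
    · have := h i; rwa [Function.update_self] at this
    · have := h j
      rwa [Function.update_of_ne (Ne.symm hij), Function.update_self] at this
    · have := h k
      rwa [Function.update_of_ne hk1, Function.update_of_ne hk2] at this
  · rintro ⟨hs, ht, hrest⟩ k
    by_cases hk1 : k = i
    · subst hk1; rwa [Function.update_self]
    by_cases hk2 : k = j
    · subst hk2; rwa [Function.update_of_ne hk1, Function.update_self]
    · rw [Function.update_of_ne hk1, Function.update_of_ne hk2]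
      exact hrest k hk1 hk2

end Update

lemma volume_Icc_inter_Iio (r : ℝ) :
    volume (Set.Icc (0:ℝ) 1 ∩ Set.Iio r) = ENNReal.ofReal (clampR r) := by
  rcases le_or_gt r 0 with h | h
  · have : Set.Icc (0:ℝ) 1 ∩ Set.Iio r = ∅ := by
      ext y; simp only [Set.mem_inter_iff, Set.mem_Icc, Set.mem_Iio,
        Set.mem_empty_iff_false, iff_false]
      rintro ⟨⟨h0, -⟩, hy⟩; linarith
    rw [this, measure_empty, clampR_of_nonpos h, ENNReal.ofReal_zero]
  rcases le_or_gt r 1 with h1 | h1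
  · have : Set.Icc (0:ℝ) 1 ∩ Set.Iio r = Set.Ico 0 r := by
      ext y; simp only [Set.mem_inter_iff, Set.mem_Icc, Set.mem_Iio, Set.mem_Ico]
      constructor
      · rintro ⟨⟨h0, -⟩, hy⟩; exact ⟨h0, hy⟩
      · rintro ⟨h0, hy⟩; exact ⟨⟨h0, by linarith⟩, hy⟩
    rw [this, Real.volume_Ico, clampR_of_mem h.le h1, sub_zero]
  · have : Set.Icc (0:ℝ) 1 ∩ Set.Iio r = Set.Icc 0 1 := by
      rw [Set.inter_eq_left]
      intro y hy; exact lt_of_le_of_lt hy.2 h1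
    rw [this, Real.volume_Icc, clampR_of_ge h1.le]
    norm_num

lemma ofReal_clamp_mul (r : ℝ) :
    ENNReal.ofReal (clampR r) * ENNReal.ofReal (1 - max r 0) = ENNReal.ofReal (Gr r) := by
  rcases le_or_gt r 1 with h | h
  · have hmx : max r 0 = clampR r := by rw [clampR, min_eq_left h, max_comm]
    rw [hmx, ← ENNReal.ofReal_mul (clampR_nonneg r)]; rfl
  · rw [clampR_of_ge h.le, Gr_of_ge h.le]
    have h2 : (1:ℝ) - max r 0 ≤ 0 := by
      have : (1:ℝ) ≤ max r 0 := le_max_of_le_left h.le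
      linarith
    rw [ENNReal.ofReal_of_nonpos h2]
    simp

section DoubleInt

open Finset

variable {n : ℕ} (w : Fin n → ℝ) (q : ℝ) {i j : Fin n}

lemma double_int (hij : i ≠ j) (hi : 0 < w i) (x : Fin n → ℝ)
    (hx : ∀ k, k ≠ i → k ≠ j → x k ∈ Set.Icc (0:ℝ) 1) :
    (∫⁻ t, ∫⁻ s, pivF w q i (Function.update (Function.update x j t) i s)) =
      ∫⁻ t in Set.Icc (0:ℝ) 1,
        ENNReal.ofReal (Gr ((q - cc w i j x - w j * t) / w i)) := by
  rw [← lintegral_indicator measurableSet_Icc]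
  refine lintegral_congr fun t => ?_
  by_cases ht : t ∈ Set.Icc (0:ℝ) 1
  · rw [Set.indicator_of_mem ht]
    set r : ℝ := (q - cc w i j x - w j * t) / w i with hr
    have hpt : ∀ s : ℝ, pivF w q i (Function.update (Function.update x j t) i s) =
        Set.indicator (Set.Icc (0:ℝ) 1 ∩ Set.Iio r)
          (fun _ => ENNReal.ofReal (1 - max r 0)) s := by
      intro s
      by_cases hs : s ∈ Set.Icc (0:ℝ) 1 ∩ Set.Iio r
      · rw [Set.indicator_of_mem hs]
        have hmem : Function.update (Function.update x j t) i s ∈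
            {y : Fin n → ℝ | y ∈ unitCube n ∧ (∑ k, w k * y k) < q} := by
          refine ⟨(cube_update₂ hij x s t).2 ⟨hs.1, ht, hx⟩, ?_⟩
          rw [sum_update₂ w (Ne.symm hij) x t s]
          have := hs.2
          rw [Set.mem_Iio, hr, lt_div_iff₀ hi] at this
          linarith
        rw [pivF, Set.indicator_of_mem hmem]
        rw [sum_erase_update₂ w (Ne.symm hij) x t s]
        congr 2
        rw [hr]; ring_nf
      · rw [Set.indicator_of_notMem hs]
        have hnm : Function.update (Function.update x j t) i s ∉
            {y : Fin n → ℝ | y ∈ unitCube n ∧ (∑ k, w k * y k) < q} := by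
          intro hmem
          apply hs
          have hcube := (cube_update₂ hij x s t).1 hmem.1
          refine ⟨hcube.1, ?_⟩
          have hsum := hmem.2
          rw [sum_update₂ w (Ne.symm hij) x t s] at hsum
          rw [Set.mem_Iio, hr, lt_div_iff₀ hi]
          linarith
        rw [pivF, Set.indicator_of_notMem hnm]
    rw [lintegral_congr hpt,
      lintegral_indicator_const (measurableSet_Icc.inter measurableSet_Iio),
      volume_Icc_inter_Iio, mul_comm, ofReal_clamp_mul]
  · rw [Set.indicator_of_notMem ht]
    have hpt : ∀ s : ℝ, pivF w q i (Function.update (Function.update x j t) i s) = 0 := by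
      intro s
      have hnm : Function.update (Function.update x j t) i s ∉
          {y : Fin n → ℝ | y ∈ unitCube n ∧ (∑ k, w k * y k) < q} := by
        intro hmem
        exact ht ((cube_update₂ hij x s t).1 hmem.1).2.1
      rw [pivF, Set.indicator_of_notMem hnm]
    simp only [hpt, lintegral_zero]

end DoubleInt

lemma pivF_zero {n : ℕ} (w : Fin n → ℝ) (q : ℝ) {i j : Fin n} (hij : i ≠ j)
    (x : Fin n → ℝ) (hx : ¬ ∀ k, k ≠ i → k ≠ j → x k ∈ Set.Icc (0:ℝ) 1) (t s : ℝ) :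
    pivF w q i (Function.update (Function.update x j t) i s) = 0 := by
  have hnm : Function.update (Function.update x j t) i s ∉
      {y : Fin n → ℝ | y ∈ unitCube n ∧ (∑ k, w k * y k) < q} :=
    fun hmem => hx ((cube_update₂ hij x s t).1 hmem.1).2.2
  rw [pivF, Set.indicator_of_notMem hnm]

/-- If w_i ≥ w_j > 0 then Vol(Piv_j) ≤ Vol(Piv_i). -/
theorem vol_piv_monotone
    {n : ℕ} (hn : 1 ≤ n) (w : Fin n → ℝ) (q : ℝ) (hw : ∀ k, w k ≠ 0)
    (i j : Fin n) (hij : w j ≤ w i) (hj : 0 < w j) :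
    volume (piv w q j) ≤ volume (piv w q i) := by
  by_cases hij' : i = j
  · subst hij'; exact le_rfl
  have hi : 0 < w i := lt_of_lt_of_le hj hij
  rw [vol_piv_eq w q j hj, vol_piv_eq w q i hi, MeasureTheory.volume_pi]
  refine lintegral_le_of_lmarginal_le {i, j} (measurable_pivF w q j) (measurable_pivF w q i)
    fun x => ?_
  have hins1 : ({i, j} : Finset (Fin n)) = insert i {j} := rfl
  have hins2 : ({i, j} : Finset (Fin n)) = insert j {i} := Finset.pair_comm i j
  rw [hins1, lmarginal_insert _ (measurable_pivF w q j)
    (Finset.notMem_singleton.2 hij') x]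
  conv_rhs => rw [hins2]
  rw [lmarginal_insert _ (measurable_pivF w q i)
    (Finset.notMem_singleton.2 (Ne.symm hij')) x]
  simp_rw [lmarginal_singleton]
  by_cases hx : ∀ k, k ≠ i → k ≠ j → x k ∈ Set.Icc (0:ℝ) 1
  · have hxj : ∀ k, k ≠ j → k ≠ i → x k ∈ Set.Icc (0:ℝ) 1 := fun k h1 h2 => hx k h2 h1
    rw [double_int w q (Ne.symm hij') hj x hxj, double_int w q hij' hi x hx, cc_comm]
    exact key_lint hj hij
  · have hxj : ¬ ∀ k, k ≠ j → k ≠ i → x k ∈ Set.Icc (0:ℝ) 1 :=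
      fun h => hx fun k h1 h2 => h k h2 h1
    simp only [pivF_zero w q (Ne.symm hij') x hxj, pivF_zero w q hij' x hx, lintegral_zero,
      le_refl]
end

section
/- Let v be a linear classifier on [0,1]^n with weights w and threshold q, and suppose w_i > w_j > 0. If x ∈ Piv_j(b) \ Piv_i(b) for some b ∈ [0,1] and f_ij(x) ∉ Piv_i(b), then x_i ≥ b > x_j. -/
/-!
Pivotality at `j` gives `x j < b`. Suppose also `x i < b`. As `x` is pivotal at `j` but not at the
heavier coordinate `i`, `w i * (b - x i) < w j * (b - x j)`, which forces `x j < x i`. Then `f_ij(x)`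
carries the larger value on the lighter weight, so it still loses, while setting its `i`-th
coordinate to `b` gives the score `w ⬝ᵥ x + w j * (b - x j) + (w i - w j) * (b - x i) ≥ q`.
Hence `f_ij(x) ∈ Piv_i(b)`.
-/

open MeasureTheory

/-- The map f_ij swapping coordinates i and j. -/
def swapCoords {n : ℕ} (i j : Fin n) (x : Fin n → ℝ) : Fin n → ℝ :=
  x ∘ Equiv.swap i j

open Function
open scoped Matrix

theorem dotProduct_update {ι R : Type*} [Fintype ι] [DecidableEq ι] [NonUnitalNonAssocRing R]
    (w x : ι → R) (i : ι) (b : R) :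
    w ⬝ᵥ update x i b = w ⬝ᵥ x + w i * (b - x i) := by
  have h : update x i b = x + Pi.single i (b - x i) := by
    ext k; rcases eq_or_ne k i with rfl | hk <;> simp [*]
  rw [h, dotProduct_add, dotProduct_single]

theorem dotProduct_comp_swap {ι R : Type*} [Fintype ι] [DecidableEq ι] [NonUnitalNonAssocRing R]
    (w x : ι → R) {i j : ι} (hij : i ≠ j) :
    w ⬝ᵥ x ∘ Equiv.swap i j = w ⬝ᵥ x + (w i - w j) * (x j - x i) := by
  rw [Equiv.comp_swap_eq_update, dotProduct_update, dotProduct_update, update_of_ne hij]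
  noncomm_ring

theorem linClass_eq_zero_iff {n : ℕ} (w : Fin n → ℝ) (q : ℝ) (x : Fin n → ℝ) :
    linClass w q x = 0 ↔ w ⬝ᵥ x < q := by
  unfold linClass; split_ifs with h <;> simp_all [dotProduct]

theorem linClass_eq_one_iff {n : ℕ} (w : Fin n → ℝ) (q : ℝ) (x : Fin n → ℝ) :
    linClass w q x = 1 ↔ q ≤ w ⬝ᵥ x := by
  unfold linClass; split_ifs with h <;> simp_all [dotProduct]

theorem mem_pivSet_iff {n : ℕ} {w : Fin n → ℝ} {q : ℝ} {i : Fin n} {b : ℝ} {x : Fin n → ℝ} :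
    x ∈ pivSet w q i b ↔ x ∈ unitCube n ∧ w ⬝ᵥ x < q ∧ q ≤ w ⬝ᵥ x + w i * (b - x i) := by
  rw [pivSet, Set.mem_ofPred_eq, linClass_eq_zero_iff, linClass_eq_one_iff, dotProduct_update]

theorem swapCoords_mem_unitCube {n : ℕ} {x : Fin n → ℝ} (hx : x ∈ unitCube n) (i j : Fin n) :
    swapCoords i j x ∈ unitCube n :=
  fun k _ => hx (Equiv.swap i j k) (Set.mem_univ _)

section Pivotal

variable {n : ℕ} {w : Fin n → ℝ} {q : ℝ} {i j : Fin n} {b : ℝ} {x : Fin n → ℝ}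

theorem lt_of_mem_pivSet (hw : 0 ≤ w i) (hx : x ∈ pivSet w q i b) : x i < b := by
  obtain ⟨-, hlose, hwin⟩ := mem_pivSet_iff.1 hx
  exact sub_pos.1 (pos_of_mul_pos_right (by linarith) hw)

theorem lt_of_mem_pivSet_of_notMem_pivSet (hj : 0 < w j) (hij : w j < w i) (hxi : x i < b)
    (hx : x ∈ pivSet w q j b) (hx' : x ∉ pivSet w q i b) : x j < x i := by
  obtain ⟨hcube, hlose, hwin⟩ := mem_pivSet_iff.1 hx
  have hlose_i : w ⬝ᵥ x + w i * (b - x i) < q :=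
    lt_of_not_ge fun hwin_i => hx' (mem_pivSet_iff.2 ⟨hcube, hlose, hwin_i⟩)
  have hgain : w j * (b - x i) < w j * (b - x j) :=
    calc w j * (b - x i) < w i * (b - x i) := mul_lt_mul_of_pos_right hij (sub_pos.2 hxi)
      _ < w j * (b - x j) := by linarith
  linarith [lt_of_mul_lt_mul_left hgain hj.le]

theorem swapCoords_mem_pivSet (hij : w j < w i) (hx : x ∈ pivSet w q j b) (hji : x j < x i)
    (hxi : x i ≤ b) : swapCoords i j x ∈ pivSet w q i b := by
  obtain ⟨hcube, hlose, hwin⟩ := mem_pivSet_iff.1 hx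
  have hne : i ≠ j := by rintro rfl; exact lt_irrefl _ hji
  rw [mem_pivSet_iff, swapCoords, dotProduct_comp_swap _ _ hne, comp_apply, Equiv.swap_apply_left]
  refine ⟨swapCoords_mem_unitCube hcube i j, ?_, ?_⟩
  · linarith [mul_neg_of_pos_of_neg (sub_pos.2 hij) (sub_neg.2 hji)]
  · linarith [mul_nonneg (sub_nonneg.2 hij.le) (sub_nonneg.2 hxi)]

end Pivotal

theorem swap_not_piv_implies_sandwich_general
    {n : ℕ} (w : Fin n → ℝ) (q : ℝ)
    (i j : Fin n) (hij : w j < w i) (hj : 0 < w j)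
    (b : ℝ)
    (x : Fin n → ℝ) (hx : x ∈ pivSet w q j b) (hx' : x ∉ pivSet w q i b)
    (hf : swapCoords i j x ∉ pivSet w q i b) :
    b ≤ x i ∧ x j < b := by
  refine ⟨le_of_not_gt fun hxi => hf ?_, lt_of_mem_pivSet hj.le hx⟩
  exact swapCoords_mem_pivSet hij hx (lt_of_mem_pivSet_of_notMem_pivSet hj hij hxi hx hx') hxi.le

/-- If w_i > w_j > 0, x ∈ Piv_j(b) \ Piv_i(b) and
f_ij(x) ∉ Piv_i(b), then x_i ≥ b > x_j. -/
theorem swap_not_piv_implies_sandwich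
    {n : ℕ} (hn : 1 ≤ n) (w : Fin n → ℝ) (q : ℝ) (hw : ∀ k, w k ≠ 0)
    (i j : Fin n) (hij : w j < w i) (hj : 0 < w j)
    (b : ℝ) (hb : b ∈ Set.Icc (0 : ℝ) 1)
    (x : Fin n → ℝ) (hx : x ∈ pivSet w q j b) (hx' : x ∉ pivSet w q i b)
    (hf : swapCoords i j x ∉ pivSet w q i b) :
    b ≤ x i ∧ x j < b :=
  swap_not_piv_implies_sandwich_general w q i j hij hj b x hx hx' hf
end

section
/- Let v be a two-feature linear classifier on [0,1]^2 with weights w_1 > 0 and w_2 < 0 and threshold q satisfying the non-degeneracy condition w_2 < q < w_1. Then χ_1 > χ_2 if and only if |w_1| > |w_2|. -/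
/-!
If `χ` is the indicator of a set of measure `p` in a probability space, then
`∫∫ |χ b - χ b'| = 2 p (1 - p)`. Applying this on each line parallel to the `i`-th axis turns
`χ_i` into `∫₀¹ 2 p(t) (1 - p(t)) dt`, where `p(t)` is the length of the part of that line on
which `v = 1`. For a linear classifier `p` is an affine function clamped to `[0, 1]`, so both
influences are explicit piecewise polynomials in `a = w₁`, `d = -w₂` and `y = w₁ - q`, and they
are exchanged by swapping `a` and `d`. Comparing them on the three ranges of `y` (cut at `a` and
`d`) shows that the feature with the larger weight has the larger influence.
-/

open MeasureTheory

open Set Filter Topology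

lemma abs_indicator_one_sub_indicator_one {β : Type*} (s : Set β) (b b' : β) :
    |s.indicator (1 : β → ℝ) b - s.indicator 1 b'| =
      s.indicator 1 b + (1 - 2 * s.indicator 1 b) * s.indicator 1 b' := by
  by_cases hb : b ∈ s <;> by_cases hb' : b' ∈ s <;> norm_num [hb, hb']

section Influence

variable {α β : Type*} [MeasurableSpace α] [MeasurableSpace β]

lemma integral_integral_abs_indicator_sub_s15 (ν : Measure β) [IsProbabilityMeasure ν] {s : Set β}
    (hs : MeasurableSet s) :
    ∫ b, ∫ b', |s.indicator (1 : β → ℝ) b - s.indicator 1 b'| ∂ν ∂ν =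
      2 * ν.real s * (1 - ν.real s) := by
  have integral_affine : ∀ x : ℝ, ∫ b, (x + (1 - 2 * x) * s.indicator 1 b) ∂ν =
      x + (1 - 2 * x) * ν.real s := fun x => by
    rw [integral_add (integrable_const _) (((integrable_const 1).indicator hs).const_mul _),
      integral_const_mul, integral_const, integral_indicator_one hs, probReal_univ, one_smul]
  simp_rw [abs_indicator_one_sub_indicator_one, integral_affine]
  calc ∫ b, (s.indicator 1 b + (1 - 2 * s.indicator 1 b) * ν.real s) ∂ν
      = ∫ b, (ν.real s + (1 - 2 * ν.real s) * s.indicator 1 b) ∂ν := by congr 1; ext; ring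
    _ = 2 * ν.real s * (1 - ν.real s) := by rw [integral_affine]; ring

lemma integral_integral_abs_indicator_update_snd (μ : Measure α) (ν : Measure β)
    [IsFiniteMeasure μ] [IsProbabilityMeasure ν] {H : Set (α × β)} (hH : MeasurableSet H) :
    ∫ b, ∫ z, |H.indicator (1 : α × β → ℝ) (z.1, b) - H.indicator 1 z| ∂(μ.prod ν) ∂ν =
      ∫ a, 2 * ν.real (Prod.mk a ⁻¹' H) * (1 - ν.real (Prod.mk a ⁻¹' H)) ∂μ := by
  set F : β → α × β → ℝ := fun b z => |H.indicator 1 (z.1, b) - H.indicator 1 z|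
  have hF : Integrable (Function.uncurry F) (ν.prod (μ.prod ν)) := by
    refine Integrable.of_bound (C := 1) ?_ (ae_of_all _ fun ⟨b, a, b'⟩ => ?_)
    · have hind := measurable_one.indicator hH (β := ℝ)
      exact ((hind.comp (by fun_prop)).sub (hind.comp measurable_snd)).abs.aestronglyMeasurable
    · by_cases h : (a, b) ∈ H <;> by_cases h' : (a, b') ∈ H <;> simp [F, h, h']
  rw [integral_integral_swap hF, integral_prod (fun z => ∫ b, F b z ∂ν) hF.integral_prod_right]
  refine integral_congr_ae (ae_of_all _ fun a => ?_)
  dsimp only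
  rw [← integral_integral_abs_indicator_sub_s15 ν (measurable_prodMk_left hH)]
  simp only [F, abs_sub_comm]
  rfl

end Influence

instance isProbabilityMeasure_restrict_Icc_zero_one :
    IsProbabilityMeasure (volume.restrict (Icc (0 : ℝ) 1)) :=
  ⟨by simp⟩

lemma setIntegral_unitCube_two (f : (Fin 2 → ℝ) → ℝ) :
    ∫ x in unitCube 2, f x =
      ∫ z, f ![z.1, z.2] ∂(volume.restrict (Icc 0 1)).prod (volume.restrict (Icc 0 1)) := by
  rw [unitCube, volume_pi, Measure.restrict_pi_pi,
    ← ((measurePreserving_finTwoArrow _).symm _).integral_comp']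
  rfl

lemma setIntegral_unitCube_two_swap (f : (Fin 2 → ℝ) → ℝ) :
    ∫ x in unitCube 2, f x =
      ∫ z, f ![z.2, z.1] ∂(volume.restrict (Icc 0 1)).prod (volume.restrict (Icc 0 1)) := by
  rw [setIntegral_unitCube_two, ← integral_prod_swap]
  rfl

lemma linClass_two (w : Fin 2 → ℝ) (q s t : ℝ) :
    linClass w q ![s, t] = {z : ℝ × ℝ | q ≤ w 0 * z.1 + w 1 * z.2}.indicator 1 (s, t) := by
  simp [linClass, indicator_apply, Fin.sum_univ_two]

lemma chiLin_two_zero_eq_integral (w : Fin 2 → ℝ) (q : ℝ) :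
    chiLin w q 0 = ∫ t in Icc 0 1,
      2 * (volume.restrict (Icc 0 1)).real {s | q ≤ w 0 * s + w 1 * t} *
        (1 - (volume.restrict (Icc 0 1)).real {s | q ≤ w 0 * s + w 1 * t}) := by
  have hupdate : ∀ s t b : ℝ, Function.update ![s, t] 0 b = ![b, t] := by
    intro s t b; ext i; fin_cases i <;> simp
  simp_rw [chiLin, setIntegral_unitCube_two_swap, hupdate, linClass_two]
  exact integral_integral_abs_indicator_update_snd
    (H := {z : ℝ × ℝ | q ≤ w 0 * z.2 + w 1 * z.1}) _ _
    (measurableSet_le measurable_const (by fun_prop))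

lemma chiLin_two_one_eq_integral (w : Fin 2 → ℝ) (q : ℝ) :
    chiLin w q 1 = ∫ s in Icc 0 1,
      2 * (volume.restrict (Icc 0 1)).real {t | q ≤ w 0 * s + w 1 * t} *
        (1 - (volume.restrict (Icc 0 1)).real {t | q ≤ w 0 * s + w 1 * t}) := by
  have hupdate : ∀ s t b : ℝ, Function.update ![s, t] 1 b = ![s, b] := by
    intro s t b; ext i; fin_cases i <;> simp
  simp_rw [chiLin, setIntegral_unitCube_two, hupdate, linClass_two]
  exact integral_integral_abs_indicator_update_snd _ _
    (measurableSet_le measurable_const (by fun_prop))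

noncomputable def clampUnit (x : ℝ) : ℝ := max 0 (min x 1)

lemma clampUnit_of_nonpos {x : ℝ} (hx : x ≤ 0) : clampUnit x = 0 := by
  simp [clampUnit, min_le_of_left_le hx]

lemma clampUnit_of_mem {x : ℝ} (h0 : 0 ≤ x) (h1 : x ≤ 1) : clampUnit x = x := by
  simp [clampUnit, h0, h1]

lemma clampUnit_of_one_le {x : ℝ} (hx : 1 ≤ x) : clampUnit x = 1 := by
  simp [clampUnit, hx]

lemma continuous_clampUnit : Continuous clampUnit := by
  unfold clampUnit; fun_prop

lemma measureReal_restrict_Icc_Iic (r : ℝ) :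
    (volume.restrict (Icc 0 1)).real (Iic r) = clampUnit r := by
  have hinter : Iic r ∩ Icc 0 1 = Icc 0 (min r 1) := by
    ext; simp only [mem_inter_iff, mem_Iic, mem_Icc, le_min_iff]; tauto
  rw [measureReal_restrict_apply measurableSet_Iic, hinter, Real.volume_real_Icc,
    sub_zero, max_comm, clampUnit]

lemma measureReal_restrict_Icc_Ici (r : ℝ) :
    (volume.restrict (Icc 0 1)).real (Ici r) = clampUnit (1 - r) := by
  have hinter : Ici r ∩ Icc 0 1 = Icc (max 0 r) 1 := by
    ext; simp only [mem_inter_iff, mem_Ici, mem_Icc, max_le_iff]; tauto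
  rw [measureReal_restrict_apply measurableSet_Ici, hinter, Real.volume_real_Icc,
    max_comm, clampUnit]
  grind

lemma measureReal_setOf_le_add_mul_of_pos {a : ℝ} (ha : 0 < a) (q c t : ℝ) :
    (volume.restrict (Icc 0 1)).real {s | q ≤ a * s + c * t} =
      clampUnit ((a - q) / a + c / a * t) := by
  have hset : {s | q ≤ a * s + c * t} = Ici ((q - c * t) / a) := by
    ext s; rw [mem_ofPred_eq, mem_Ici, div_le_iff₀ ha]; constructor <;> intro <;> linarith
  rw [hset, measureReal_restrict_Icc_Ici]
  congr 1
  field_simp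
  ring

lemma measureReal_setOf_le_add_mul_of_neg {c : ℝ} (hc : c < 0) (q a s : ℝ) :
    (volume.restrict (Icc 0 1)).real {t | q ≤ a * s + c * t} =
      clampUnit (q / c + -a / c * s) := by
  have hset : {t | q ≤ a * s + c * t} = Iic ((q - a * s) / c) := by
    ext t; rw [mem_ofPred_eq, mem_Iic, le_div_iff_of_neg hc]; constructor <;> intro <;> linarith
  rw [hset, measureReal_restrict_Icc_Iic]
  congr 1
  field_simp
  ring

noncomputable def clampCubic (x : ℝ) : ℝ := clampUnit x ^ 2 - 2 / 3 * clampUnit x ^ 3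

lemma clampCubic_of_nonpos {x : ℝ} (hx : x ≤ 0) : clampCubic x = 0 := by
  simp [clampCubic, clampUnit_of_nonpos hx]

lemma clampCubic_of_mem {x : ℝ} (h0 : 0 ≤ x) (h1 : x ≤ 1) :
    clampCubic x = x ^ 2 - 2 / 3 * x ^ 3 := by
  rw [clampCubic, clampUnit_of_mem h0 h1]

lemma clampCubic_of_one_le {x : ℝ} (hx : 1 ≤ x) : clampCubic x = 1 / 3 := by
  rw [clampCubic, clampUnit_of_one_le hx]; norm_num

-- At the kinks `0` and `1` the one-sided derivatives agree because `2 y (1 - y)` vanishes there.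
lemma hasDerivAt_clampCubic (x : ℝ) :
    HasDerivAt clampCubic (2 * clampUnit x * (1 - clampUnit x)) x := by
  set g : ℝ → ℝ := fun y => y ^ 2 - 2 / 3 * y ^ 3
  have hg : ∀ y, HasDerivAt g (2 * y * (1 - y)) y := fun y =>
    ((hasDerivAt_pow 2 y).sub ((hasDerivAt_pow 3 y).const_mul (2 / 3 : ℝ))).congr_deriv (by ring)
  have on_Iic : EqOn clampCubic (fun _ => 0) (Iic 0) := fun y hy => clampCubic_of_nonpos hy
  have on_Icc : EqOn clampCubic g (Icc 0 1) := fun y hy => clampCubic_of_mem hy.1 hy.2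
  have on_Ici : EqOn clampCubic (fun _ => 1 / 3) (Ici 1) := fun y hy => clampCubic_of_one_le hy
  have of_sides : ∀ {f' : ℝ}, HasDerivWithinAt clampCubic f' (Iic x) x →
      HasDerivWithinAt clampCubic f' (Ici x) x → HasDerivAt clampCubic f' x := fun hl hr => by
    simpa [Iic_union_Ici] using hl.union hr
  rcases lt_or_ge x 0 with hx0 | hx0
  · rw [clampUnit_of_nonpos hx0.le, mul_zero, zero_mul]
    exact (hasDerivAt_const x 0).congr_of_eventuallyEq
      (eventually_of_mem (Iio_mem_nhds hx0) fun y hy => on_Iic (mem_Iio.1 hy).le)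
  rcases lt_or_ge 1 x with hx1 | hx1
  · rw [clampUnit_of_one_le hx1.le, sub_self, mul_zero]
    exact (hasDerivAt_const x (1 / 3)).congr_of_eventuallyEq
      (eventually_of_mem (Ioi_mem_nhds hx1) fun y hy => on_Ici (mem_Ioi.1 hy).le)
  rw [clampUnit_of_mem hx0 hx1]
  rcases hx0.eq_or_lt with rfl | hx0
  · refine of_sides ?_ ?_
    · simpa using (hasDerivWithinAt_const 0 (Iic 0) (0 : ℝ)).congr on_Iic (on_Iic self_mem_Iic)
    · exact (hg 0).hasDerivWithinAt.congr_of_eventuallyEq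
        (eventually_of_mem (Icc_mem_nhdsGE zero_lt_one) on_Icc) (on_Icc ⟨le_rfl, zero_le_one⟩)
  rcases hx1.eq_or_lt with rfl | hx1
  · refine of_sides ?_ ?_
    · exact (hg 1).hasDerivWithinAt.congr_of_eventuallyEq
        (eventually_of_mem (Icc_mem_nhdsLE zero_lt_one) on_Icc) (on_Icc ⟨zero_le_one, le_rfl⟩)
    · simpa using (hasDerivWithinAt_const 1 (Ici 1) (1 / 3 : ℝ)).congr on_Ici (on_Ici self_mem_Ici)
  exact (hg x).congr_of_eventuallyEq (eventually_of_mem (Icc_mem_nhds hx0 hx1) on_Icc)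

lemma integral_clampUnit_affine (u v : ℝ) (hv : v ≠ 0) :
    ∫ t in Icc 0 1, 2 * clampUnit (u + v * t) * (1 - clampUnit (u + v * t)) =
      (clampCubic (u + v) - clampCubic u) / v := by
  have hderiv : ∀ t ∈ uIcc (0 : ℝ) 1, HasDerivAt (fun t => clampCubic (u + v * t) / v)
      (2 * clampUnit (u + v * t) * (1 - clampUnit (u + v * t))) t := fun t _ => by
    have hlin : HasDerivAt (fun t : ℝ => u + v * t) v t := by
      simpa using ((hasDerivAt_id t).const_mul v).const_add u
    exact (((hasDerivAt_clampCubic _).comp t hlin).div_const v).congr_deriv (by field_simp)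
  have hcont : Continuous fun t => 2 * clampUnit (u + v * t) * (1 - clampUnit (u + v * t)) := by
    have := continuous_clampUnit; fun_prop
  rw [integral_Icc_eq_integral_Ioc, ← intervalIntegral.integral_of_le zero_le_one,
    intervalIntegral.integral_eq_sub_of_hasDerivAt hderiv (hcont.intervalIntegrable 0 1)]
  simp [sub_div]

/-- `χ` of the feature of weight `a > 0` when the other weight is `-d < 0` and `y = a - q`. -/
noncomputable def mixedInfluence (a d y : ℝ) : ℝ :=
  a / d * (clampCubic (y / a) - clampCubic ((y - d) / a))

lemma chiLin_two_zero_eq (w : Fin 2 → ℝ) (q : ℝ) (h0 : 0 < w 0) (h1 : w 1 < 0) :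
    chiLin w q 0 = mixedInfluence (w 0) (-w 1) (w 0 - q) := by
  simp_rw [chiLin_two_zero_eq_integral, measureReal_setOf_le_add_mul_of_pos h0]
  rw [integral_clampUnit_affine _ _ (div_ne_zero h1.ne h0.ne'), mixedInfluence,
    show (w 0 - q - -w 1) / w 0 = (w 0 - q) / w 0 + w 1 / w 0 by ring]
  field_simp
  ring

lemma chiLin_two_one_eq (w : Fin 2 → ℝ) (q : ℝ) (h0 : 0 < w 0) (h1 : w 1 < 0) :
    chiLin w q 1 = mixedInfluence (-w 1) (w 0) (w 0 - q) := by
  simp_rw [chiLin_two_one_eq_integral, measureReal_setOf_le_add_mul_of_neg h1]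
  rw [integral_clampUnit_affine _ _ (div_ne_zero (neg_ne_zero.2 h0.ne') h1.ne), mixedInfluence,
    show (w 0 - q) / -w 1 = q / w 1 + -w 0 / w 1 by ring,
    show (w 0 - q - w 0) / -w 1 = q / w 1 by ring]
  field_simp

section MixedInfluence

variable {a d y : ℝ}

lemma mixedInfluence_sub_swap_of_le_min (ha : 0 < a) (hd : 0 < d) (hy : 0 ≤ y) (hya : y ≤ a)
    (hyd : y ≤ d) :
    mixedInfluence a d y - mixedInfluence d a y = 2 / 3 * y ^ 3 * (a - d) / (a ^ 2 * d ^ 2) := by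
  rw [mixedInfluence, mixedInfluence, clampCubic_of_mem (by positivity) ((div_le_one ha).2 hya),
    clampCubic_of_nonpos (div_nonpos_of_nonpos_of_nonneg (by linarith) ha.le),
    clampCubic_of_mem (by positivity) ((div_le_one hd).2 hyd),
    clampCubic_of_nonpos (div_nonpos_of_nonpos_of_nonneg (by linarith) hd.le)]
  field_simp
  ring

lemma mixedInfluence_sub_swap_of_mem_Icc (ha : 0 < a) (hd : 0 < d) (hdy : d ≤ y) (hya : y ≤ a) :
    mixedInfluence a d y - mixedInfluence d a y =
      (2 * (y - d) * (a - y) + 2 / 3 * d * (a - d)) / a ^ 2 := by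
  rw [mixedInfluence, mixedInfluence, clampCubic_of_mem (div_nonneg (by linarith) ha.le) ((div_le_one ha).2 hya),
    clampCubic_of_mem (div_nonneg (by linarith) ha.le) ((div_le_one ha).2 (by linarith)),
    clampCubic_of_one_le ((one_le_div hd).2 hdy),
    clampCubic_of_nonpos (div_nonpos_of_nonpos_of_nonneg (by linarith) hd.le)]
  field_simp
  ring

lemma mixedInfluence_sub_swap_of_max_le (ha : 0 < a) (hd : 0 < d) (hay : a ≤ y) (hdy : d ≤ y)
    (hyad : y ≤ a + d) :
    mixedInfluence a d y - mixedInfluence d a y =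
      2 / 3 * (a + d - y) ^ 3 * (a - d) / (a ^ 2 * d ^ 2) := by
  rw [mixedInfluence, mixedInfluence, clampCubic_of_one_le ((one_le_div ha).2 hay),
    clampCubic_of_mem (div_nonneg (by linarith) ha.le) ((div_le_one ha).2 (by linarith)),
    clampCubic_of_one_le ((one_le_div hd).2 hdy),
    clampCubic_of_mem (div_nonneg (by linarith) hd.le) ((div_le_one hd).2 (by linarith))]
  field_simp
  ring

lemma mixedInfluence_swap_lt (hd : 0 < d) (hda : d < a) (hy : 0 < y) (hyad : y < a + d) :
    mixedInfluence d a y < mixedInfluence a d y := by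
  have ha : 0 < a := hd.trans hda
  have had : 0 < a - d := sub_pos.2 hda
  rw [← sub_pos]
  rcases le_total y d with hyd | hdy
  · rw [mixedInfluence_sub_swap_of_le_min ha hd hy.le (by linarith) hyd]
    positivity
  rcases le_total y a with hya | hay
  · rw [mixedInfluence_sub_swap_of_mem_Icc ha hd hdy hya]
    have := sub_nonneg.2 hdy
    have := sub_nonneg.2 hya
    positivity
  · rw [mixedInfluence_sub_swap_of_max_le ha hd hay hdy hyad.le]
    have := sub_pos.2 hyad
    positivity

lemma mixedInfluence_swap_lt_iff (ha : 0 < a) (hd : 0 < d) (hy : 0 < y) (hyad : y < a + d) :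
    mixedInfluence d a y < mixedInfluence a d y ↔ d < a := by
  refine ⟨fun h => lt_of_not_ge fun had => ?_, fun hda => mixedInfluence_swap_lt hd hda hy hyad⟩
  rcases had.eq_or_lt with rfl | hlt
  · exact lt_irrefl _ h
  · exact (mixedInfluence_swap_lt ha hlt hy (by linarith)).not_gt h

end MixedInfluence

/-- For a two-feature linear classifier with w_1 > 0 > w_2 and
w_2 < q < w_1, feature 1 is strictly more influential than feature 2 iff
|w_1| > |w_2|. -/
theorem chiLin_two_features_mixed_signs
    (w : Fin 2 → ℝ) (q : ℝ)
    (h1 : 0 < w 0) (h2 : w 1 < 0)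
    (hq1 : w 1 < q) (hq2 : q < w 0) :
    chiLin w q 0 > chiLin w q 1 ↔ |w 0| > |w 1| := by
  rw [chiLin_two_zero_eq w q h1 h2, chiLin_two_one_eq w q h1 h2, abs_of_pos h1, abs_of_neg h2]
  exact mixedInfluence_swap_lt_iff h1 (neg_pos.2 h2) (sub_pos.2 hq2) (by linarith)
end
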